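/- arXiv:2410.11249 — 4 statements merged into one kernel-verified Lean document; each statement's English description precedes it below -/
import Mathlib

section
/- Let α>1, n≥1 an integer, 𝑳=(L_1,…,L_n) a vector of positive reals, K⊂ℝ^n a compact set, and let φ,ψ:ℝ^n→ℂ be smooth functions with finite Gevrey-(α,𝑳) norms on K. Then ‖φ·ψ‖_{α,𝑳} ≤ ‖φ‖_{α,𝑳}·‖ψ‖_{α,𝑳}; that is, the Gevrey-(α,𝑳) norm is submultiplicative (Banach-algebra property). -/
open scoped BigOperators
open Finset

noncomputable section

/-- Partial derivative in the `j`-th coordinate direction. -/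
def pd {E : Type*} [NormedAddCommGroup E] [NormedSpace ℝ E] {n : ℕ}
    (j : Fin n) (φ : (Fin n → ℝ) → E) : (Fin n → ℝ) → E :=
  fun x => fderiv ℝ φ x (Pi.single j 1)

/-- Mixed partial derivative `∂^k = ∂₁^{k₁} ⋯ ∂ₙ^{kₙ}`. -/
def mpd {E : Type*} [NormedAddCommGroup E] [NormedSpace ℝ E] {n : ℕ}
    (k : Fin n → ℕ) (φ : (Fin n → ℝ) → E) : (Fin n → ℝ) → E :=
  (List.finRange n).foldr (fun j ψ => (pd j)^[k j] ψ) φ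

/-- Sup (C⁰) norm of `ψ` on `K`. -/
def supOn {E : Type*} [NormedAddCommGroup E] {n : ℕ}
    (K : Set (Fin n → ℝ)) (ψ : (Fin n → ℝ) → E) : ℝ :=
  sSup ((fun x => ‖ψ x‖) '' K)

/-- The `k`-th term of the Gevrey-(α, 𝑳) norm of `φ` on `K`:
`(𝑳^k / k!)^α · ‖∂^k φ‖_{C⁰(K)}`. -/
def gevreyTerm {E : Type*} [NormedAddCommGroup E] [NormedSpace ℝ E] {n : ℕ}
    (α : ℝ) (L : Fin n → ℝ) (K : Set (Fin n → ℝ))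
    (φ : (Fin n → ℝ) → E) (k : Fin n → ℕ) : ℝ :=
  ((∏ j, L j ^ k j) / ∏ j, (Nat.factorial (k j) : ℝ)) ^ α * supOn K (mpd k φ)

namespace GevreyAux

variable {n : ℕ}

/-- foldr of iterated directional derivatives over a list of coordinates. -/
def D (l : List (Fin n)) (k : Fin n → ℕ) (f : (Fin n → ℝ) → ℂ) : (Fin n → ℝ) → ℂ :=
  l.foldr (fun j ψ => (pd j)^[k j] ψ) f

lemma mpd_eq_D (k : Fin n → ℕ) (f : (Fin n → ℝ) → ℂ) : mpd k f = D (List.finRange n) k f := rfl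

lemma pd_smooth {j : Fin n} {f : (Fin n → ℝ) → ℂ} (hf : ContDiff ℝ (⊤ : ℕ∞) f) :
    ContDiff ℝ (⊤ : ℕ∞) (pd j f) :=
  (hf.fderiv_right (by simp)).clm_apply contDiff_const

lemma pd_iter_smooth (j : Fin n) (N : ℕ) {f : (Fin n → ℝ) → ℂ} (hf : ContDiff ℝ (⊤ : ℕ∞) f) :
    ContDiff ℝ (⊤ : ℕ∞) ((pd j)^[N] f) := by
  induction N generalizing f with
  | zero => exact hf
  | succ N ih => rw [Function.iterate_succ_apply]; exact ih (pd_smooth hf)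

lemma D_smooth (l : List (Fin n)) (k : Fin n → ℕ) {f : (Fin n → ℝ) → ℂ}
    (hf : ContDiff ℝ (⊤ : ℕ∞) f) : ContDiff ℝ (⊤ : ℕ∞) (D l k f) := by
  induction l with
  | nil => exact hf
  | cons j t ih => exact pd_iter_smooth j (k j) ih

lemma D_congr (l : List (Fin n)) {k k' : Fin n → ℕ} (h : ∀ j ∈ l, k j = k' j)
    (f : (Fin n → ℝ) → ℂ) : D l k f = D l k' f := by
  induction l with
  | nil => rfl
  | cons j t ih =>
      show (pd j)^[k j] (D t k f) = (pd j)^[k' j] (D t k' f)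
      rw [h j List.mem_cons_self, ih fun j' hj' => h j' (List.mem_cons_of_mem _ hj')]

lemma pd_sum {ι : Type*} (j : Fin n) (s : Finset ι) (F : ι → (Fin n → ℝ) → ℂ)
    (hF : ∀ i ∈ s, ContDiff ℝ (⊤ : ℕ∞) (F i)) :
    pd j (fun x => ∑ i ∈ s, F i x) = fun x => ∑ i ∈ s, pd j (F i) x := by
  funext x
  show fderiv ℝ (fun y => ∑ i ∈ s, F i y) x (Pi.single j 1) = _
  rw [fderiv_fun_sum fun i hi => ((hF i hi).differentiable (by simp)).differentiableAt]
  simp [pd]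

lemma pd_iter_sum {ι : Type*} (j : Fin n) (N : ℕ) (s : Finset ι) (F : ι → (Fin n → ℝ) → ℂ)
    (hF : ∀ i ∈ s, ContDiff ℝ (⊤ : ℕ∞) (F i)) :
    (pd j)^[N] (fun x => ∑ i ∈ s, F i x) = fun x => ∑ i ∈ s, (pd j)^[N] (F i) x := by
  induction N generalizing F with
  | zero => rfl
  | succ N ih =>
      rw [Function.iterate_succ_apply, pd_sum j s F hF,
        ih (fun i => pd j (F i)) (fun i hi => pd_smooth (hF i hi))]
      simp [Function.iterate_succ_apply]

lemma pd_const_mul (j : Fin n) (c : ℂ) {f : (Fin n → ℝ) → ℂ} (hf : ContDiff ℝ (⊤ : ℕ∞) f) :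
    pd j (fun x => c * f x) = fun x => c * pd j f x := by
  funext x
  show fderiv ℝ (fun y => c * f y) x (Pi.single j 1) = _
  rw [fderiv_const_mul ((hf.differentiable (by simp)).differentiableAt) c]
  simp [pd]

lemma pd_iter_const_mul (j : Fin n) (N : ℕ) (c : ℂ) {f : (Fin n → ℝ) → ℂ}
    (hf : ContDiff ℝ (⊤ : ℕ∞) f) :
    (pd j)^[N] (fun x => c * f x) = fun x => c * (pd j)^[N] f x := by
  induction N generalizing f with
  | zero => rfl
  | succ N ih =>
      rw [Function.iterate_succ_apply, pd_const_mul j c hf, ih (pd_smooth hf)]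
      simp [Function.iterate_succ_apply]

lemma pd_mul (j : Fin n) {f g : (Fin n → ℝ) → ℂ} (hf : ContDiff ℝ (⊤ : ℕ∞) f)
    (hg : ContDiff ℝ (⊤ : ℕ∞) g) :
    pd j (fun x => f x * g x) = fun x => f x * pd j g x + g x * pd j f x := by
  funext x
  show fderiv ℝ (fun y => f y * g y) x (Pi.single j 1) = _
  rw [fderiv_fun_mul ((hf.differentiable (by simp)).differentiableAt)
    ((hg.differentiable (by simp)).differentiableAt)]
  simp [pd, smul_eq_mul]

lemma pascal (a b : ℕ → ℂ) (N : ℕ) :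
    ∑ i ∈ range (N + 2), ((N + 1).choose i : ℂ) * (a i * b (N + 1 - i))
      = (∑ i ∈ range (N + 1), (N.choose i : ℂ) * (a (i + 1) * b (N - i)))
        + ∑ i ∈ range (N + 1), (N.choose i : ℂ) * (a i * b (N + 1 - i)) := by
  have h2 := sum_range_succ' (fun i => ((N : ℕ).choose i : ℂ) * (a i * b (N + 1 - i))) (N + 1)
  have h3 := sum_range_succ (fun i => ((N : ℕ).choose i : ℂ) * (a i * b (N + 1 - i))) (N + 1)
  have h4 := sum_range_succ' (fun i => ((N + 1).choose i : ℂ) * (a i * b (N + 1 - i))) (N + 1)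
  simp only [Nat.succ_sub_succ, Nat.choose_succ_succ, Nat.cast_add, Nat.choose_zero_right,
    Nat.cast_one, one_mul, Nat.choose_succ_self, Nat.cast_zero, zero_mul, add_zero,
    Nat.sub_zero, add_mul] at h2 h3 h4
  rw [h4, sum_add_distrib]
  rw [h3] at h2
  linear_combination -h2

lemma pd_iter_mul (j : Fin n) (N : ℕ) {f g : (Fin n → ℝ) → ℂ} (hf : ContDiff ℝ (⊤ : ℕ∞) f)
    (hg : ContDiff ℝ (⊤ : ℕ∞) g) :
    (pd j)^[N] (fun x => f x * g x)
      = fun x => ∑ i ∈ range (N + 1),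
          (N.choose i : ℂ) * ((pd j)^[i] f x * (pd j)^[N - i] g x) := by
  induction N with
  | zero => funext x; simp
  | succ N ih =>
      rw [Function.iterate_succ_apply', ih]
      have hsm : ∀ i ∈ range (N + 1),
          ContDiff ℝ (⊤ : ℕ∞) (fun x => (N.choose i : ℂ) * ((pd j)^[i] f x * (pd j)^[N - i] g x)) :=
        fun i _ => contDiff_const.mul ((pd_iter_smooth j i hf).mul (pd_iter_smooth j (N - i) hg))
      rw [pd_sum j (range (N + 1)) _ hsm]
      funext x
      have key : ∀ i ∈ range (N + 1),
          pd j (fun y => (N.choose i : ℂ) * ((pd j)^[i] f y * (pd j)^[N - i] g y)) x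
            = (N.choose i : ℂ) * ((pd j)^[i + 1] f x * (pd j)^[N - i] g x)
              + (N.choose i : ℂ) * ((pd j)^[i] f x * (pd j)^[N + 1 - i] g x) := by
        intro i hi
        have hi' : i ≤ N := Nat.lt_succ_iff.mp (mem_range.mp hi)
        have hs : N - i + 1 = N + 1 - i := (Nat.succ_sub hi').symm
        rw [pd_const_mul j _ ((pd_iter_smooth j i hf).mul (pd_iter_smooth j (N - i) hg)),
          pd_mul j (pd_iter_smooth j i hf) (pd_iter_smooth j (N - i) hg)]
        beta_reduce
        rw [← Function.iterate_succ_apply' (pd j) (N - i) g,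
          ← Function.iterate_succ_apply' (pd j) i f]
        simp only [Nat.succ_eq_add_one, hs]
        ring
      rw [sum_congr rfl key, sum_add_distrib]
      exact (pascal (fun i => (pd j)^[i] f x) (fun i => (pd j)^[i] g x) N).symm


lemma sum_update_Iic (k : Fin n → ℕ) (j : Fin n) (H : (Fin n → ℕ) → ℂ) :
    ∑ m ∈ Finset.Iic (Function.update k j 0), ∑ i ∈ range (k j + 1), H (Function.update m j i)
      = ∑ m ∈ Finset.Iic k, H m := by
  rw [sum_sigma' (Finset.Iic (Function.update k j 0)) (fun _ => range (k j + 1))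
    (fun m i => H (Function.update m j i))]
  apply Finset.sum_nbij' (i := fun q => Function.update q.1 j q.2)
    (j := fun m => ⟨Function.update m j 0, m j⟩)
  · rintro ⟨m, i⟩ hq
    simp only [Finset.mem_sigma, Finset.mem_Iic, mem_range] at hq
    rw [Finset.mem_Iic]
    intro j'
    by_cases h : j' = j
    · subst h; simpa [Function.update_self] using Nat.lt_succ_iff.mp hq.2
    · have := hq.1 j'
      simpa [Function.update_apply, h] using this
  · intro m hm
    rw [Finset.mem_Iic] at hm
    simp only [Finset.mem_sigma, Finset.mem_Iic, mem_range]
    constructor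
    · intro j'
      by_cases h : j' = j
      · subst h; simp
      · simpa [Function.update_apply, h] using hm j'
    · exact Nat.lt_succ_of_le (hm j)
  · rintro ⟨m, i⟩ hq
    simp only [Finset.mem_sigma, Finset.mem_Iic, mem_range] at hq
    have hmj : m j = 0 := Nat.le_zero.mp (by simpa using hq.1 j)
    have h1 : Function.update (Function.update m j i) j 0 = m := by
      funext j'
      by_cases h : j' = j
      · subst h; simp [hmj]
      · simp [Function.update_apply, h]
    have h2 : (Function.update m j i) j = i := Function.update_self j i m
    exact Sigma.ext (by simp [h1]) (by simp [h1, h2])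
  · intro m hm
    funext j'
    by_cases h : j' = j
    · subst h; simp
    · simp [Function.update_apply, h]
  · rintro ⟨m, i⟩ _; rfl

lemma foldr_leibniz (l : List (Fin n)) (hl : l.Nodup) (k : Fin n → ℕ)
    (hk : ∀ j, j ∉ l → k j = 0) {f g : (Fin n → ℝ) → ℂ}
    (hf : ContDiff ℝ (⊤ : ℕ∞) f) (hg : ContDiff ℝ (⊤ : ℕ∞) g) :
    D l k (fun x => f x * g x)
      = fun x => ∑ m ∈ Finset.Iic k,
          ((∏ j, (k j).choose (m j) : ℕ) : ℂ) * (D l m f x * D l (k - m) g x) := by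
  induction l generalizing k with
  | nil =>
      have hk0 : k = 0 := funext fun j => hk j List.not_mem_nil
      subst hk0
      have hIic : Finset.Iic (0 : Fin n → ℕ) = {0} := by
        ext m; simp [Finset.mem_Iic, le_zero_iff]
      funext x
      rw [hIic]
      simp [D]
  | cons j t ih =>
      obtain ⟨hj, ht⟩ := List.nodup_cons.mp hl
      set k' : Fin n → ℕ := Function.update k j 0 with hk'
      have hk't : ∀ j', j' ∉ t → k' j' = 0 := by
        intro j' hj'
        by_cases h : j' = j
        · subst h; simp [hk']
        · rw [hk', Function.update_apply, if_neg h]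
          exact hk j' (by simp [h, hj'])
      show (pd j)^[k j] (D t k fun x => f x * g x) = _
      have e1 : D t k (fun x => f x * g x) = D t k' (fun x => f x * g x) :=
        D_congr t (fun j' hj' => by
          have hne : j' ≠ j := fun h => hj (h ▸ hj')
          rw [hk', Function.update_apply, if_neg hne]) _
      rw [e1, ih ht k' hk't]
      have hsm : ∀ m ∈ Finset.Iic k', ContDiff ℝ (⊤ : ℕ∞)
          (fun x => ((∏ j', (k' j').choose (m j') : ℕ) : ℂ) * (D t m f x * D t (k' - m) g x)) :=
        fun m _ => contDiff_const.mul ((D_smooth t m hf).mul (D_smooth t (k' - m) hg))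
      rw [pd_iter_sum j (k j) _ _ hsm]
      funext x
      have key : ∀ m ∈ Finset.Iic k',
          (pd j)^[k j] (fun y => ((∏ j', (k' j').choose (m j') : ℕ) : ℂ)
            * (D t m f y * D t (k' - m) g y)) x
          = ∑ i ∈ range (k j + 1),
              ((∏ j', (k j').choose ((Function.update m j i) j') : ℕ) : ℂ)
                * (D (j :: t) (Function.update m j i) f x
                   * D (j :: t) (k - Function.update m j i) g x) := by
        intro m hm
        have hm' : m ≤ k' := Finset.mem_Iic.mp hm
        have hmj : m j = 0 := Nat.le_zero.mp (by simpa [hk'] using hm' j)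
        rw [pd_iter_const_mul j (k j) _ ((D_smooth t m hf).mul (D_smooth t (k' - m) hg)),
          pd_iter_mul j (k j) (D_smooth t m hf) (D_smooth t (k' - m) hg)]
        beta_reduce
        rw [Finset.mul_sum]
        apply Finset.sum_congr rfl
        intro i hi
        have hi' : i ≤ k j := Nat.lt_succ_iff.mp (mem_range.mp hi)
        have eA : (pd j)^[i] (D t m f) = D (j :: t) (Function.update m j i) f := by
          show _ = (pd j)^[(Function.update m j i) j] (D t (Function.update m j i) f)
          rw [Function.update_self]
          congr 1
          exact D_congr t (fun j' hj' => by
            have hne : j' ≠ j := fun h => hj (h ▸ hj')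
            rw [Function.update_apply, if_neg hne]) f
        have eB : (pd j)^[k j - i] (D t (k' - m) g)
            = D (j :: t) (k - Function.update m j i) g := by
          show _ = (pd j)^[(k - Function.update m j i) j] (D t (k - Function.update m j i) g)
          have hsub : (k - Function.update m j i) j = k j - i := by
            simp [Pi.sub_apply]
          rw [hsub]
          congr 1
          exact D_congr t (fun j' hj' => by
            have hne : j' ≠ j := fun h => hj (h ▸ hj')
            simp only [Pi.sub_apply, hk', Function.update_apply, if_neg hne]) g
        have coefEq : (∏ j', (k' j').choose (m j')) * (k j).choose i
            = ∏ j', (k j').choose ((Function.update m j i) j') := by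
          rw [prod_eq_mul_prod_sdiff_singleton_of_mem (mem_univ j) (fun j' => (k' j').choose (m j')),
            prod_eq_mul_prod_sdiff_singleton_of_mem (mem_univ j)
              (fun j' => (k j').choose ((Function.update m j i) j'))]
          have h1 : (k' j).choose (m j) = 1 := by simp [hk', hmj]
          have h2 : ∏ j' ∈ univ \ {j}, (k' j').choose (m j')
              = ∏ j' ∈ univ \ {j}, (k j').choose ((Function.update m j i) j') := by
            apply prod_congr rfl
            intro j' hj'
            have hne : j' ≠ j := by
              intro h; exact (Finset.mem_sdiff.mp hj').2 (by simp [h])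
            rw [hk', Function.update_apply, if_neg hne, Function.update_apply, if_neg hne]
          rw [h1, h2, Function.update_self]
          ring
        rw [eA, eB]
        have hc : ((∏ j', (k j').choose ((Function.update m j i) j') : ℕ) : ℂ)
            = ((∏ j', (k' j').choose (m j') : ℕ) : ℂ) * ((k j).choose i : ℂ) := by
          rw [← coefEq]; push_cast; ring
        rw [hc]
        ring
      rw [sum_congr rfl key]
      exact sum_update_Iic k j
        (fun m' => ((∏ j', (k j').choose (m' j') : ℕ) : ℂ)
          * (D (j :: t) m' f x * D (j :: t) (k - m') g x))

lemma mpd_mul (k : Fin n → ℕ) {f g : (Fin n → ℝ) → ℂ}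
    (hf : ContDiff ℝ (⊤ : ℕ∞) f) (hg : ContDiff ℝ (⊤ : ℕ∞) g) :
    mpd k (fun x => f x * g x)
      = fun x => ∑ m ∈ Finset.Iic k,
          ((∏ j, (k j).choose (m j) : ℕ) : ℂ) * (mpd m f x * mpd (k - m) g x) := by
  simp only [mpd_eq_D]
  exact foldr_leibniz (List.finRange n) (List.nodup_finRange n) k
    (fun j hj => absurd (List.mem_finRange j) hj) hf hg


lemma supOn_nonneg (K : Set (Fin n → ℝ)) (f : (Fin n → ℝ) → ℂ) : 0 ≤ supOn K f :=
  Real.sSup_nonneg (by rintro x ⟨y, _, rfl⟩; positivity)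

lemma le_supOn {K : Set (Fin n → ℝ)} (hK : IsCompact K) {f : (Fin n → ℝ) → ℂ}
    (hf : Continuous f) {x : (Fin n → ℝ)} (hx : x ∈ K) : ‖f x‖ ≤ supOn K f :=
  le_csSup (hK.image hf.norm).bddAbove ⟨x, hx, rfl⟩

lemma supOn_le {K : Set (Fin n → ℝ)} {f : (Fin n → ℝ) → ℂ} {C : ℝ} (hC : 0 ≤ C)
    (h : ∀ x ∈ K, ‖f x‖ ≤ C) : supOn K f ≤ C :=
  Real.sSup_le (by rintro _ ⟨y, hy, rfl⟩; exact h y hy) hC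

lemma mpd_smooth (k : Fin n → ℕ) {f : (Fin n → ℝ) → ℂ} (hf : ContDiff ℝ (⊤ : ℕ∞) f) :
    ContDiff ℝ (⊤ : ℕ∞) (mpd k f) := by
  rw [mpd_eq_D]; exact D_smooth _ k hf

lemma gevreyTerm_nonneg (α : ℝ) {L : Fin n → ℝ} (hL : ∀ j, 0 < L j)
    (K : Set (Fin n → ℝ)) (f : (Fin n → ℝ) → ℂ) (k : Fin n → ℕ) :
    0 ≤ gevreyTerm α L K f k :=
  mul_nonneg (Real.rpow_nonneg (div_nonneg
    (prod_nonneg fun j _ => pow_nonneg (hL j).le _)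
    (prod_nonneg fun j _ => by positivity)) _) (supOn_nonneg K _)

lemma coef_ineq {α : ℝ} (hα : 1 < α) {L : Fin n → ℝ} (hL : ∀ j, 0 < L j)
    {k m : Fin n → ℕ} (hm : m ≤ k) :
    ((∏ j, L j ^ k j) / ∏ j, ((k j).factorial : ℝ)) ^ α * ((∏ j, (k j).choose (m j) : ℕ) : ℝ)
      ≤ ((∏ j, L j ^ m j) / ∏ j, ((m j).factorial : ℝ)) ^ α
        * ((∏ j, L j ^ (k j - m j)) / ∏ j, (((k j - m j)).factorial : ℝ)) ^ α := by
  set A : ℝ := ∏ j, L j ^ m j with hA'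
  set B : ℝ := ∏ j, L j ^ (k j - m j) with hB'
  set F1 : ℝ := ∏ j, ((m j).factorial : ℝ) with hF1'
  set F2 : ℝ := ∏ j, (((k j - m j)).factorial : ℝ) with hF2'
  set P : ℝ := ((∏ j, (k j).choose (m j) : ℕ) : ℝ) with hP'
  have hA : (0:ℝ) < A := prod_pos fun j _ => pow_pos (hL j) _
  have hB : (0:ℝ) < B := prod_pos fun j _ => pow_pos (hL j) _
  have hF1 : (0:ℝ) < F1 := prod_pos fun j _ => by positivity
  have hF2 : (0:ℝ) < F2 := prod_pos fun j _ => by positivity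
  have hP1 : (1:ℝ) ≤ P := by
    rw [hP']
    exact_mod_cast Nat.one_le_iff_ne_zero.mpr
      (Nat.pos_iff_ne_zero.mp (prod_pos fun j _ => Nat.choose_pos (hm j)))
  have hP : (0:ℝ) < P := lt_of_lt_of_le one_pos hP1
  have hprodL : (∏ j, L j ^ k j) = A * B := by
    rw [hA', hB', ← prod_mul_distrib]
    refine prod_congr rfl fun j _ => ?_
    rw [← pow_add, Nat.add_sub_cancel' (hm j)]
  have hn : (∏ j, (k j).factorial)
      = (∏ j, (k j).choose (m j)) * (∏ j, (m j).factorial) * ∏ j, (k j - m j).factorial := by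
    rw [← prod_mul_distrib, ← prod_mul_distrib]
    exact prod_congr rfl fun j _ => (Nat.choose_mul_factorial_mul_factorial (hm j)).symm
  have hprodF : (∏ j, ((k j).factorial : ℝ)) = P * F1 * F2 := by
    rw [hP', hF1', hF2']
    push_cast
    exact_mod_cast hn
  have hWk : ((∏ j, L j ^ k j) / ∏ j, ((k j).factorial : ℝ)) ^ α
      = (A / F1) ^ α * (B / F2) ^ α * (P ^ α)⁻¹ := by
    rw [hprodL, hprodF]
    rw [show A * B / (P * F1 * F2) = (A / F1) * (B / F2) * P⁻¹ by field_simp]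
    rw [Real.mul_rpow (mul_nonneg (div_nonneg hA.le hF1.le) (div_nonneg hB.le hF2.le))
      (inv_nonneg.mpr hP.le),
      Real.mul_rpow (div_nonneg hA.le hF1.le) (div_nonneg hB.le hF2.le),
      Real.inv_rpow hP.le]
  rw [hWk]
  have hPα : P ≤ P ^ α := by
    nth_rewrite 1 [← Real.rpow_one P]
    exact Real.rpow_le_rpow_of_exponent_le hP1 hα.le
  have h1 : (P ^ α)⁻¹ * P ≤ 1 := by
    calc (P ^ α)⁻¹ * P ≤ (P ^ α)⁻¹ * P ^ α :=
          mul_le_mul_of_nonneg_left hPα (inv_nonneg.mpr (Real.rpow_nonneg hP.le α))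
      _ = 1 := inv_mul_cancel₀ (ne_of_gt (Real.rpow_pos_of_pos hP α))
  have hnn : 0 ≤ (A / F1) ^ α * (B / F2) ^ α :=
    mul_nonneg (Real.rpow_nonneg (div_nonneg hA.le hF1.le) _)
      (Real.rpow_nonneg (div_nonneg hB.le hF2.le) _)
  calc (A / F1) ^ α * (B / F2) ^ α * (P ^ α)⁻¹ * P
      = ((A / F1) ^ α * (B / F2) ^ α) * ((P ^ α)⁻¹ * P) := by ring
    _ ≤ ((A / F1) ^ α * (B / F2) ^ α) * 1 := mul_le_mul_of_nonneg_left h1 hnn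
    _ = (A / F1) ^ α * (B / F2) ^ α := by ring

lemma term_bound {α : ℝ} (hα : 1 < α) {L : Fin n → ℝ} (hL : ∀ j, 0 < L j)
    {K : Set (Fin n → ℝ)} (hK : IsCompact K) {f g : (Fin n → ℝ) → ℂ}
    (hf : ContDiff ℝ (⊤ : ℕ∞) f) (hg : ContDiff ℝ (⊤ : ℕ∞) g) (k : Fin n → ℕ) :
    gevreyTerm α L K (fun x => f x * g x) k
      ≤ ∑ m ∈ Finset.Iic k, gevreyTerm α L K f m * gevreyTerm α L K g (k - m) := by
  classical
  set W : (Fin n → ℕ) → ℝ :=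
    fun c => ((∏ j, L j ^ c j) / ∏ j, ((c j).factorial : ℝ)) ^ α with hW'
  have hW0 : ∀ c, 0 ≤ W c := fun c =>
    Real.rpow_nonneg (div_nonneg
      (prod_nonneg fun j _ => pow_nonneg (hL j).le _)
      (prod_nonneg fun j _ => by positivity)) _
  have hsup0 : ∀ (c : Fin n → ℕ) (h : (Fin n → ℝ) → ℂ), 0 ≤ supOn K (mpd c h) :=
    fun c h => supOn_nonneg K _
  set C : ℝ := ∑ m ∈ Finset.Iic k, ((∏ j, (k j).choose (m j) : ℕ) : ℝ)
      * (supOn K (mpd m f) * supOn K (mpd (k - m) g)) with hC'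
  have hC0 : 0 ≤ C :=
    sum_nonneg fun m _ => mul_nonneg (Nat.cast_nonneg _)
      (mul_nonneg (hsup0 _ _) (hsup0 _ _))
  have hsupC : supOn K (mpd k (fun x => f x * g x)) ≤ C := by
    apply supOn_le hC0
    intro x hx
    rw [mpd_mul k hf hg]
    calc ‖∑ m ∈ Finset.Iic k,
          ((∏ j, (k j).choose (m j) : ℕ) : ℂ) * (mpd m f x * mpd (k - m) g x)‖
        ≤ ∑ m ∈ Finset.Iic k,
          ‖((∏ j, (k j).choose (m j) : ℕ) : ℂ) * (mpd m f x * mpd (k - m) g x)‖ :=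
          norm_sum_le _ _
      _ ≤ C := by
          rw [hC']
          apply sum_le_sum
          intro m _
          rw [norm_mul, norm_mul, Complex.norm_natCast]
          apply mul_le_mul_of_nonneg_left _ (Nat.cast_nonneg _)
          exact mul_le_mul (le_supOn hK (mpd_smooth m hf).continuous hx)
            (le_supOn hK (mpd_smooth (k - m) hg).continuous hx)
            (norm_nonneg _) (hsup0 _ _)
  calc gevreyTerm α L K (fun x => f x * g x) k
      = W k * supOn K (mpd k (fun x => f x * g x)) := rfl
    _ ≤ W k * C := mul_le_mul_of_nonneg_left hsupC (hW0 k)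
    _ = ∑ m ∈ Finset.Iic k, (W k * ((∏ j, (k j).choose (m j) : ℕ) : ℝ))
          * (supOn K (mpd m f) * supOn K (mpd (k - m) g)) := by
        rw [hC', Finset.mul_sum]
        exact sum_congr rfl fun m _ => by ring
    _ ≤ ∑ m ∈ Finset.Iic k, (W m * W (k - m))
          * (supOn K (mpd m f) * supOn K (mpd (k - m) g)) := by
        apply sum_le_sum
        intro m hm
        exact mul_le_mul_of_nonneg_right (coef_ineq hα hL (Finset.mem_Iic.mp hm))
          (mul_nonneg (hsup0 _ _) (hsup0 _ _))
    _ = ∑ m ∈ Finset.Iic k, gevreyTerm α L K f m * gevreyTerm α L K g (k - m) :=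
        sum_congr rfl fun m _ => by
          show (W m * W (k - m)) * _ = (W m * supOn K (mpd m f)) * (W (k - m) * supOn K (mpd (k - m) g))
          ring

end GevreyAux

/-- the Gevrey-(α,𝑳) norm is submultiplicative (Banach algebra property). -/
theorem gevrey_banach_algebra {n : ℕ} (hn : 1 ≤ n) {α : ℝ} (hα : 1 < α)
    (L : Fin n → ℝ) (hL : ∀ j, 0 < L j)
    (K : Set (Fin n → ℝ)) (hK : IsCompact K)
    (φ ψ : (Fin n → ℝ) → ℂ)
    (hφs : ContDiff ℝ (⊤ : ℕ∞) φ) (hψs : ContDiff ℝ (⊤ : ℕ∞) ψ)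
    (hφ : Summable (gevreyTerm α L K φ)) (hψ : Summable (gevreyTerm α L K ψ)) :
    Summable (gevreyTerm α L K (fun x => φ x * ψ x)) ∧
      ∑' k, gevreyTerm α L K (fun x => φ x * ψ x) k ≤
        (∑' k, gevreyTerm α L K φ k) * ∑' k, gevreyTerm α L K ψ k := by
  classical
  have ha0 : ∀ m, 0 ≤ gevreyTerm α L K φ m := GevreyAux.gevreyTerm_nonneg α hL K φ
  have hb0 : ∀ m, 0 ≤ gevreyTerm α L K ψ m := GevreyAux.gevreyTerm_nonneg α hL K ψ
  have hbound : ∀ S : Finset (Fin n → ℕ),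
      ∑ k ∈ S, gevreyTerm α L K (fun x => φ x * ψ x) k ≤
        (∑' k, gevreyTerm α L K φ k) * ∑' k, gevreyTerm α L K ψ k := by
    intro S
    have hinj : ∀ q ∈ S.sigma (fun k => Finset.Iic k), ∀ q' ∈ S.sigma (fun k => Finset.Iic k),
        (fun q : Σ _ : Fin n → ℕ, Fin n → ℕ => (q.2, q.1 - q.2)) q
          = (fun q : Σ _ : Fin n → ℕ, Fin n → ℕ => (q.2, q.1 - q.2)) q' → q = q' := by
      rintro ⟨k1, m1⟩ hq ⟨k2, m2⟩ hq' h
      simp only [Finset.mem_sigma, Finset.mem_Iic] at hq hq'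
      simp only [Prod.mk.injEq] at h
      obtain ⟨h1, h2⟩ := h
      have hk12 : k1 = k2 := by
        have e1 : k1 - m1 + m1 = k1 := tsub_add_cancel_of_le hq.2
        have e2 : k2 - m2 + m2 = k2 := tsub_add_cancel_of_le hq'.2
        calc k1 = k1 - m1 + m1 := e1.symm
          _ = k2 - m2 + m2 := by rw [h2, h1]
          _ = k2 := e2
      subst hk12; subst h1; rfl
    calc ∑ k ∈ S, gevreyTerm α L K (fun x => φ x * ψ x) k
        ≤ ∑ k ∈ S, ∑ m ∈ Finset.Iic k, gevreyTerm α L K φ m * gevreyTerm α L K ψ (k - m) :=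
          Finset.sum_le_sum fun k _ => GevreyAux.term_bound hα hL hK hφs hψs k
      _ = ∑ q ∈ S.sigma (fun k => Finset.Iic k),
            gevreyTerm α L K φ q.2 * gevreyTerm α L K ψ (q.1 - q.2) :=
          Finset.sum_sigma' S (fun k => Finset.Iic k) _
      _ = ∑ p ∈ (S.sigma (fun k => Finset.Iic k)).image
            (fun q : Σ _ : Fin n → ℕ, Fin n → ℕ => (q.2, q.1 - q.2)),
            gevreyTerm α L K φ p.1 * gevreyTerm α L K ψ p.2 := by
          rw [Finset.sum_image hinj]
      _ ≤ ∑ p ∈ (((S.sigma (fun k => Finset.Iic k)).image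
              (fun q : Σ _ : Fin n → ℕ, Fin n → ℕ => (q.2, q.1 - q.2))).image Prod.fst) ×ˢ
            (((S.sigma (fun k => Finset.Iic k)).image
              (fun q : Σ _ : Fin n → ℕ, Fin n → ℕ => (q.2, q.1 - q.2))).image Prod.snd),
            gevreyTerm α L K φ p.1 * gevreyTerm α L K ψ p.2 := by
          apply Finset.sum_le_sum_of_subset_of_nonneg
          · intro p hp
            exact Finset.mem_product.mpr
              ⟨Finset.mem_image_of_mem _ hp, Finset.mem_image_of_mem _ hp⟩
          · exact fun p _ _ => mul_nonneg (ha0 _) (hb0 _)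
      _ = (∑ m ∈ ((S.sigma (fun k => Finset.Iic k)).image
              (fun q : Σ _ : Fin n → ℕ, Fin n → ℕ => (q.2, q.1 - q.2))).image Prod.fst,
            gevreyTerm α L K φ m) *
          ∑ m ∈ ((S.sigma (fun k => Finset.Iic k)).image
              (fun q : Σ _ : Fin n → ℕ, Fin n → ℕ => (q.2, q.1 - q.2))).image Prod.snd,
            gevreyTerm α L K ψ m := by
          rw [Finset.sum_mul_sum, Finset.sum_product]
      _ ≤ (∑' k, gevreyTerm α L K φ k) * ∑' k, gevreyTerm α L K ψ k := by
          apply mul_le_mul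
          · exact Summable.sum_le_tsum _ (fun _ _ => ha0 _) hφ
          · exact Summable.sum_le_tsum _ (fun _ _ => hb0 _) hψ
          · exact Finset.sum_nonneg fun _ _ => hb0 _
          · exact tsum_nonneg ha0
  have hsummable : Summable (gevreyTerm α L K (fun x => φ x * ψ x)) :=
    summable_of_sum_le (fun k => GevreyAux.gevreyTerm_nonneg α hL K _ k) hbound
  exact ⟨hsummable, Summable.tsum_le_of_sum_le hsummable hbound⟩
end
end

section
/- Let α>1, L>0, d≥1, and let f:ℝ^d→ℂ be a smooth 2π-periodic function. If ‖f‖_{𝓕_{α,L}} = Σ_{k∈ℤ^d} e^{αL|k|_α}|f̂(k)| is finite, then ‖f‖_{α,L} ≤ ‖f‖_{𝓕_{α,L}}. -/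
open scoped BigOperators
open MeasureTheory

noncomputable section

/-- The fundamental domain `[0,2π]^d`. -/
def box2pi (d : ℕ) : Set (Fin d → ℝ) := Set.pi Set.univ fun _ => Set.Icc 0 (2 * Real.pi)

/-- The Fourier coefficient `f̂(k)`. -/
def fourierCoef {d : ℕ} (f : (Fin d → ℝ) → ℂ) (k : Fin d → ℤ) : ℂ :=
  ((2 * Real.pi) ^ d : ℝ)⁻¹ •
    ∫ x in box2pi d, f x * Complex.exp (-(Complex.I * ∑ j, (k j : ℂ) * (x j : ℂ)))

namespace GF

variable {d : ℕ}

/-- The character `x ↦ exp(i k·x)`. -/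
def ek (k : Fin d → ℤ) (x : Fin d → ℝ) : ℂ :=
  Complex.exp (Complex.I * ∑ j, (k j : ℂ) * (x j : ℂ))

/-- The linear form `x ↦ ∑ k j * x j`. -/
def lin (k : Fin d → ℤ) : (Fin d → ℝ) →L[ℝ] ℝ :=
  ∑ j, (k j : ℝ) • ContinuousLinearMap.proj j

lemma lin_apply (k : Fin d → ℤ) (v : Fin d → ℝ) : lin k v = ∑ j, (k j : ℝ) * v j := by
  simp [lin, ContinuousLinearMap.sum_apply]

lemma norm_lin_le (k : Fin d → ℤ) : ‖lin k‖ ≤ ∑ j, |(k j : ℝ)| := by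
  refine ContinuousLinearMap.opNorm_le_bound _ (by positivity) fun v => ?_
  rw [lin_apply]
  calc ‖∑ j, (k j : ℝ) * v j‖ ≤ ∑ j, ‖(k j : ℝ) * v j‖ := norm_sum_le _ _
    _ ≤ ∑ j, |(k j : ℝ)| * ‖v‖ := by
        refine Finset.sum_le_sum fun j _ => ?_
        rw [norm_mul]
        exact mul_le_mul_of_nonneg_left (norm_le_pi_norm v j) (abs_nonneg _)
    _ = (∑ j, |(k j : ℝ)|) * ‖v‖ := by rw [Finset.sum_mul]

lemma ek_eq (k : Fin d → ℤ) (x : Fin d → ℝ) :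
    ek k x = Complex.exp (Complex.I * ((∑ j, (k j : ℝ) * x j : ℝ) : ℂ)) := by
  unfold ek; push_cast; ring_nf

lemma norm_ek (k : Fin d → ℤ) (x : Fin d → ℝ) : ‖ek k x‖ = 1 := by
  rw [ek_eq, Complex.norm_exp]
  simp

/-- derivative of `ek` -/
def ekD (k : Fin d → ℤ) (x : Fin d → ℝ) : (Fin d → ℝ) →L[ℝ] ℂ :=
  (Complex.I * ek k x) • (Complex.ofRealCLM.comp (lin k))

lemma hasFDerivAt_ek (k : Fin d → ℤ) (x : Fin d → ℝ) :
    HasFDerivAt (ek k) (ekD k x) x := by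
  have h1 : HasFDerivAt (fun x : Fin d → ℝ => Complex.I * ((lin k x : ℝ) : ℂ))
      (Complex.I • (Complex.ofRealCLM.comp (lin k))) x := by
    have := ((Complex.ofRealCLM.comp (lin k)).hasFDerivAt (x := x)).const_smul (Complex.I)
    exact this
  have h2 := h1.cexp
  have : ek k = fun x : Fin d → ℝ => Complex.exp (Complex.I * ((lin k x : ℝ) : ℂ)) := by
    funext y; rw [ek_eq, lin_apply]
  rw [this]
  have e : ekD k x = Complex.exp (Complex.I * ((lin k x : ℝ) : ℂ)) •
      Complex.I • (Complex.ofRealCLM.comp (lin k)) := by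
    rw [ekD, ek_eq, lin_apply]
    rw [smul_smul, mul_comm]
  rw [e]; exact h2

lemma norm_ekD_le (k : Fin d → ℤ) (x : Fin d → ℝ) : ‖ekD k x‖ ≤ ∑ j, |(k j : ℝ)| := by
  refine ContinuousLinearMap.opNorm_le_bound _ (by positivity) fun v => ?_
  have hv : ekD k x v = (Complex.I * ek k x) * ((lin k v : ℝ) : ℂ) := by
    simp [ekD, smul_eq_mul]
  rw [hv, norm_mul, norm_mul, norm_ek, Complex.norm_I, one_mul, one_mul, Complex.norm_real]
  have := (lin k).le_opNorm v
  calc ‖lin k v‖ ≤ ‖lin k‖ * ‖v‖ := this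
    _ ≤ (∑ j, |(k j : ℝ)|) * ‖v‖ := by
        exact mul_le_mul_of_nonneg_right (norm_lin_le k) (norm_nonneg _)

lemma lin_single (k : Fin d → ℤ) (j : Fin d) : lin k (Pi.single j 1) = k j := by
  rw [lin_apply]
  rw [Finset.sum_eq_single j]
  · simp
  · intro i _ hij; simp [Pi.single_apply, hij]
  · simp

lemma ekD_single (k : Fin d → ℤ) (x : Fin d → ℝ) (j : Fin d) :
    ekD k x (Pi.single j 1) = (Complex.I * (k j : ℂ)) * ek k x := by
  rw [ekD]
  simp only [ContinuousLinearMap.coe_smul', Pi.smul_apply, ContinuousLinearMap.coe_comp',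
    Function.comp_apply, Complex.ofRealCLM_apply, lin_single, smul_eq_mul]
  push_cast
  ring


/-- Polynomial coefficient `∏ (i k_j)^(m_j)`. -/
def coefw (m : Fin d → ℕ) (k : Fin d → ℤ) : ℂ := ∏ j, (Complex.I * (k j : ℂ)) ^ (m j)

/-- Weight `∏ |k_j|^(m_j)`. -/
def wt (m : Fin d → ℕ) (k : Fin d → ℤ) : ℝ := ∏ j, |(k j : ℝ)| ^ (m j)

lemma wt_nonneg (m : Fin d → ℕ) (k : Fin d → ℤ) : 0 ≤ wt m k := by
  unfold wt; positivity

lemma norm_coefw (m : Fin d → ℕ) (k : Fin d → ℤ) : ‖coefw m k‖ = wt m k := by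
  unfold coefw wt
  rw [norm_prod]
  refine Finset.prod_congr rfl fun j _ => ?_
  rw [norm_pow, norm_mul, Complex.norm_I, one_mul, Complex.norm_intCast]

lemma coefw_succ (m : Fin d → ℕ) (k : Fin d → ℤ) (j : Fin d) :
    coefw (m + Pi.single j 1) k = (Complex.I * (k j : ℂ)) * coefw m k := by
  unfold coefw
  have h : ∀ i : Fin d, (Complex.I * (k i : ℂ)) ^ ((m + Pi.single j 1 : Fin d → ℕ) i)
      = (Complex.I * (k i : ℂ)) ^ (m i) * (if i = j then Complex.I * (k i : ℂ) else 1) := by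
    intro i
    by_cases hij : i = j <;> simp [hij, Pi.single_apply, pow_add, pow_succ]
  rw [Finset.prod_congr rfl fun i _ => h i, Finset.prod_mul_distrib,
    Finset.prod_ite_eq' Finset.univ j (fun i => Complex.I * (k i : ℂ))]
  simp [mul_comm]

lemma wt_succ (m : Fin d → ℕ) (k : Fin d → ℤ) (j : Fin d) :
    wt (m + Pi.single j 1) k = |(k j : ℝ)| * wt m k := by
  unfold wt
  have h : ∀ i : Fin d, |(k i : ℝ)| ^ ((m + Pi.single j 1 : Fin d → ℕ) i)
      = |(k i : ℝ)| ^ (m i) * (if i = j then |(k i : ℝ)| else 1) := by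
    intro i
    by_cases hij : i = j <;> simp [hij, Pi.single_apply, pow_add, pow_succ]
  rw [Finset.prod_congr rfl fun i _ => h i, Finset.prod_mul_distrib,
    Finset.prod_ite_eq' Finset.univ j (fun i => |(k i : ℝ)|)]
  simp [mul_comm]

variable (c : (Fin d → ℤ) → ℂ)

/-- The (differentiated) Fourier series. -/
def P (m : Fin d → ℕ) (x : Fin d → ℝ) : ℂ := ∑' k, coefw m k * c k * ek k x

variable {c}

/-- Summability hypothesis: all polynomial-weighted sums of `‖c‖` converge. -/
def SummableW (c : (Fin d → ℤ) → ℂ) : Prop :=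
  ∀ m : Fin d → ℕ, Summable fun k => wt m k * ‖c k‖

lemma SummableW.term (hs : SummableW c) (m : Fin d → ℕ) (x : Fin d → ℝ) :
    Summable fun k => coefw m k * c k * ek k x := by
  refine Summable.of_norm ?_
  refine (hs m).congr fun k => ?_
  rw [norm_mul, norm_mul, norm_coefw, norm_ek, mul_one]

lemma SummableW.deriv (hs : SummableW c) (m : Fin d → ℕ) :
    Summable fun k => (∑ j, |(k j : ℝ)|) * (wt m k * ‖c k‖) := by
  have : ∀ k, (∑ j, |(k j : ℝ)|) * (wt m k * ‖c k‖)
      = ∑ j, wt (m + Pi.single j 1) k * ‖c k‖ := by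
    intro k
    rw [Finset.sum_mul]
    refine Finset.sum_congr rfl fun j _ => ?_
    rw [wt_succ, mul_assoc]
  exact (summable_sum fun j _ => hs (m + Pi.single j 1)).congr fun k => (this k).symm

lemma SummableW.derivCLM (hs : SummableW c) (m : Fin d → ℕ) (x : Fin d → ℝ) :
    Summable fun k => (coefw m k * c k) • ekD k x := by
  refine Summable.of_norm ?_
  refine (hs.deriv m).of_nonneg_of_le (fun k => norm_nonneg _) fun k => ?_
  rw [norm_smul (coefw m k * c k) (ekD k x), norm_mul, norm_coefw]
  calc wt m k * ‖c k‖ * ‖ekD k x‖ ≤ wt m k * ‖c k‖ * (∑ j, |(k j : ℝ)|) := by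
        exact mul_le_mul_of_nonneg_left (norm_ekD_le k x)
          (mul_nonneg (wt_nonneg m k) (norm_nonneg _))
    _ = (∑ j, |(k j : ℝ)|) * (wt m k * ‖c k‖) := by ring

lemma hasFDerivAt_P (hs : SummableW c) (m : Fin d → ℕ) (x : Fin d → ℝ) :
    HasFDerivAt (P c m) (∑' k, (coefw m k * c k) • ekD k x) x := by
  have h := hasFDerivAt_tsum (𝕜 := ℝ)
    (u := fun k : Fin d → ℤ => (∑ j, |(k j : ℝ)|) * (wt m k * ‖c k‖))
    (f := fun k y => coefw m k * c k * ek k y)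
    (f' := fun k y => (coefw m k * c k) • ekD k y) (x₀ := 0)
    (hs.deriv m) (fun k y => (hasFDerivAt_ek k y).const_mul (coefw m k * c k))
    (fun k y => ?_) (hs.term m 0) x
  · exact h
  · rw [norm_smul (coefw m k * c k) (ekD k y), norm_mul, norm_coefw]
    calc wt m k * ‖c k‖ * ‖ekD k y‖ ≤ wt m k * ‖c k‖ * (∑ j, |(k j : ℝ)|) := by
          exact mul_le_mul_of_nonneg_left (norm_ekD_le k y)
            (mul_nonneg (wt_nonneg m k) (norm_nonneg _))
      _ = (∑ j, |(k j : ℝ)|) * (wt m k * ‖c k‖) := by ring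

lemma pd_P (hs : SummableW c) (m : Fin d → ℕ) (j : Fin d) :
    pd j (P c m) = P c (m + Pi.single j 1) := by
  funext x
  have hD := hasFDerivAt_P hs m x
  rw [pd, hD.fderiv]
  have happ := ContinuousLinearMap.map_tsum
    (ContinuousLinearMap.apply ℝ ℂ (Pi.single j 1 : Fin d → ℝ)) (hs.derivCLM m x)
  simp only [ContinuousLinearMap.apply_apply] at happ
  rw [happ]
  unfold P
  refine tsum_congr fun k => ?_
  rw [ContinuousLinearMap.coe_smul', Pi.smul_apply, ekD_single, coefw_succ, smul_eq_mul]
  ring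

lemma pd_iter_P (hs : SummableW c) (m : Fin d → ℕ) (j : Fin d) (n : ℕ) :
    (pd j)^[n] (P c m) = P c (m + Pi.single j n) := by
  induction n with
  | zero => simp
  | succ n ih =>
      rw [Function.iterate_succ_apply', ih, pd_P hs, add_assoc]
      have hsingle : (Pi.single j n + Pi.single j 1 : Fin d → ℕ) = Pi.single j (n + 1) := by
        funext i
        by_cases hij : i = j <;> simp [hij, Pi.single_apply]
      rw [hsingle]

lemma single_add_ite (m : Fin d → ℕ) (j : Fin d) (t : List (Fin d)) (hj : j ∉ t) :
    ((fun i => if i ∈ t then m i else 0) + Pi.single j (m j) : Fin d → ℕ)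
      = fun i => if i ∈ j :: t then m i else 0 := by
  funext i
  by_cases hij : i = j
  · subst hij
    simp [Pi.single_apply, List.elem_iff, hj]
  · by_cases hit : i ∈ t <;> simp [Pi.single_apply, hij, hit]

lemma mpd_P (hs : SummableW c) (m : Fin d → ℕ) :
    mpd m (P c 0) = P c m := by
  have key : ∀ l : List (Fin d), l.Nodup →
      l.foldr (fun j ψ => (pd j)^[m j] ψ) (P c 0)
        = P c (fun i => if i ∈ l then m i else 0) := by
    intro l hl
    induction l with
    | nil => rfl
    | cons j t ih =>
        have hj : j ∉ t := (List.nodup_cons.mp hl).1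
        rw [List.foldr_cons, ih (List.nodup_cons.mp hl).2, pd_iter_P hs,
          single_add_ite m j t hj]
  rw [mpd, key (List.finRange d) (List.nodup_finRange d)]
  have : (fun i => if i ∈ List.finRange d then m i else 0) = m := by
    funext i
    simp [List.mem_finRange]
  rw [this]

lemma continuous_P (hs : SummableW c) (m : Fin d → ℕ) : Continuous (P c m) := by
  refine continuous_tsum (fun k => ?_) (hs m) fun k x => ?_
  · have : Continuous (ek (d := d) k) := by
      unfold ek
      exact Complex.continuous_exp.comp (by continuity)
    exact (continuous_const.mul this)
  · rw [norm_mul, norm_mul, norm_coefw, norm_ek, mul_one]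

lemma measurableSet_box : MeasurableSet (box2pi d) := by
  unfold box2pi
  exact MeasurableSet.univ_pi fun j => measurableSet_Icc

lemma box_indicator_prod (g : Fin d → ℝ → ℂ) (x : Fin d → ℝ) :
    (box2pi d).indicator (fun x => ∏ j, g j (x j)) x
      = ∏ j, (Set.Icc (0:ℝ) (2 * Real.pi)).indicator (g j) (x j) := by
  by_cases hx : x ∈ box2pi d
  · rw [Set.indicator_of_mem hx]
    refine Finset.prod_congr rfl fun j _ => ?_
    rw [Set.indicator_of_mem (by exact hx j (Set.mem_univ j))]
  · rw [Set.indicator_of_notMem hx]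
    have hx' : ¬ ∀ j, x j ∈ Set.Icc (0:ℝ) (2 * Real.pi) := by
      intro hc
      exact hx fun j _ => hc j
    obtain ⟨j, hj⟩ := not_forall.mp hx'
    refine (Finset.prod_eq_zero (Finset.mem_univ j) ?_).symm
    rw [Set.indicator_of_notMem hj]

lemma box_integral_prod (g : Fin d → ℝ → ℂ) :
    ∫ x in box2pi d, ∏ j, g j (x j)
      = ∏ j, ∫ t in Set.Icc (0:ℝ) (2 * Real.pi), g j t := by
  rw [← MeasureTheory.integral_indicator measurableSet_box]
  have h1 : ∀ x, (box2pi d).indicator (fun x => ∏ j, g j (x j)) x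
      = ∏ j, (Set.Icc (0:ℝ) (2 * Real.pi)).indicator (g j) (x j) := box_indicator_prod g
  rw [integral_congr_ae (Filter.Eventually.of_forall h1)]
  rw [MeasureTheory.volume_pi, MeasureTheory.integral_fintype_prod_eq_prod (ι := Fin d)
    (f := fun j t => (Set.Icc (0:ℝ) (2 * Real.pi)).indicator (g j) t)]
  refine Finset.prod_congr rfl fun j _ => ?_
  rw [MeasureTheory.integral_indicator measurableSet_Icc]

lemma oneD_integral (n : ℤ) :
    ∫ t in Set.Icc (0:ℝ) (2 * Real.pi), Complex.exp (((n : ℂ) * Complex.I) * t)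
      = if n = 0 then ((2 * Real.pi : ℝ) : ℂ) else 0 := by
  by_cases hn : n = 0
  · subst hn
    simp only [Int.cast_zero, zero_mul, Complex.exp_zero, if_true]
    rw [MeasureTheory.setIntegral_const, measureReal_def, Real.volume_Icc]
    have : (2 * Real.pi - 0 : ℝ) = 2 * Real.pi := by ring
    rw [this, ENNReal.toReal_ofReal (by positivity)]
    simp
  · rw [if_neg hn]
    have hc : ((n : ℂ) * Complex.I) ≠ 0 := by
      simp [Complex.ext_iff, Int.cast_injective.ne hn, hn]
    have h2 : (0:ℝ) ≤ 2 * Real.pi := by positivity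
    rw [MeasureTheory.integral_Icc_eq_integral_Ioc,
      ← intervalIntegral.integral_of_le h2, integral_exp_mul_complex hc]
    have he : Complex.exp ((n : ℂ) * Complex.I * (2 * Real.pi : ℝ))
        = Complex.exp ((n : ℂ) * (2 * Real.pi * Complex.I)) := by
      congr 1
      push_cast
      ring
    rw [he, Complex.exp_int_mul_two_pi_mul_I]
    simp

lemma ek_mul_conj (k l : Fin d → ℤ) (x : Fin d → ℝ) :
    ek k x * Complex.exp (-(Complex.I * ∑ j, (l j : ℂ) * (x j : ℂ)))
      = ∏ j, Complex.exp ((((k j - l j : ℤ) : ℂ) * Complex.I) * (x j : ℂ)) := by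
  rw [ek, ← Complex.exp_add, ← Complex.exp_sum]
  congr 1
  have h : ∀ j : Fin d, (((k j - l j : ℤ) : ℂ) * Complex.I) * (x j : ℂ)
      = Complex.I * ((k j : ℂ) * (x j : ℂ)) - Complex.I * ((l j : ℂ) * (x j : ℂ)) := by
    intro j; push_cast; ring
  rw [Finset.sum_congr rfl fun j _ => h j, Finset.sum_sub_distrib, ← Finset.mul_sum,
    ← Finset.mul_sum]
  ring

lemma orthogonality (k l : Fin d → ℤ) :
    ∫ x in box2pi d, ek k x * Complex.exp (-(Complex.I * ∑ j, (l j : ℂ) * (x j : ℂ)))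
      = if k = l then (((2 * Real.pi) ^ d : ℝ) : ℂ) else 0 := by
  rw [MeasureTheory.setIntegral_congr_fun measurableSet_box
    (fun x _ => ek_mul_conj k l x)]
  rw [box_integral_prod (fun j t => Complex.exp ((((k j - l j : ℤ) : ℂ) * Complex.I) * (t : ℂ)))]
  have h1 : ∀ j, (∫ t in Set.Icc (0:ℝ) (2 * Real.pi),
      Complex.exp ((((k j - l j : ℤ) : ℂ) * Complex.I) * (t : ℂ)))
      = if k j = l j then ((2 * Real.pi : ℝ) : ℂ) else 0 := by
    intro j
    rw [oneD_integral (k j - l j)]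
    simp [sub_eq_zero]
  rw [Finset.prod_congr rfl fun j _ => h1 j]
  by_cases hkl : k = l
  · subst hkl
    simp only [if_true, Finset.prod_const, Finset.card_univ, Fintype.card_fin]
    push_cast
    ring
  · rw [if_neg hkl]
    obtain ⟨j, hj⟩ := Function.ne_iff.mp hkl
    exact Finset.prod_eq_zero (Finset.mem_univ j) (by rw [if_neg hj])

lemma coefw_zero (k : Fin d → ℤ) : coefw 0 k = 1 := by
  unfold coefw; simp

lemma continuous_ek (k : Fin d → ℤ) : Continuous (ek (d := d) k) := by
  unfold ek
  exact Complex.continuous_exp.comp (by continuity)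

lemma tpi_pos : (0:ℝ) < (2 * Real.pi) ^ d := by positivity

lemma exp_neg_eq_ek (l : Fin d → ℤ) (x : Fin d → ℝ) :
    Complex.exp (-(Complex.I * ∑ j, (l j : ℂ) * (x j : ℂ))) = ek (-l) x := by
  rw [ek]
  congr 1
  have h : ∀ j : Fin d, (((-l) j : ℂ)) * (x j : ℂ) = -((l j : ℂ) * (x j : ℂ)) := by
    intro j; rw [Pi.neg_apply]; push_cast; ring
  rw [Finset.sum_congr rfl fun j _ => h j, Finset.sum_neg_distrib]
  ring

lemma fourierCoef_P (hs : SummableW c) (l : Fin d → ℤ) :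
    fourierCoef (P c 0) l = c l := by
  have hcs : Summable fun k => ‖c k‖ := by
    have := hs 0
    simpa [wt] using this
  unfold fourierCoef
  have hP : ∀ x : Fin d → ℝ,
      P c 0 x * Complex.exp (-(Complex.I * ∑ j, (l j : ℂ) * (x j : ℂ)))
      = ∑' k, c k * (ek k x * Complex.exp (-(Complex.I * ∑ j, (l j : ℂ) * (x j : ℂ)))) := by
    intro x
    rw [P, ← tsum_mul_right]
    refine tsum_congr fun k => ?_
    rw [coefw_zero, one_mul, mul_assoc]
  rw [MeasureTheory.setIntegral_congr_fun measurableSet_box (fun x _ => hP x)]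
  have hmeas : ∀ k : Fin d → ℤ, AEStronglyMeasurable
      (fun x : Fin d → ℝ => c k * (ek k x * Complex.exp (-(Complex.I * ∑ j, (l j : ℂ) * (x j : ℂ)))))
      (volume.restrict (box2pi d)) := by
    intro k
    refine Continuous.aestronglyMeasurable ?_
    exact continuous_const.mul ((continuous_ek k).mul (Complex.continuous_exp.comp (by continuity)))
  have hnorm : ∀ (k : Fin d → ℤ) (x : Fin d → ℝ),
      ‖c k * (ek k x * Complex.exp (-(Complex.I * ∑ j, (l j : ℂ) * (x j : ℂ))))‖ = ‖c k‖ := by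
    intro k x
    rw [norm_mul, norm_mul, norm_ek, exp_neg_eq_ek, norm_ek]
    ring
  rw [MeasureTheory.integral_tsum hmeas ?_]
  · have h1 : ∀ k : Fin d → ℤ,
        (∫ x in box2pi d,
          c k * (ek k x * Complex.exp (-(Complex.I * ∑ j, (l j : ℂ) * (x j : ℂ)))))
        = c k * (if k = l then (((2 * Real.pi) ^ d : ℝ) : ℂ) else 0) := by
      intro k
      rw [MeasureTheory.integral_const_mul, orthogonality]
    rw [tsum_congr h1, tsum_eq_single l ?_]
    · rw [if_pos rfl, Complex.real_smul]
      have hne : (((2 * Real.pi) ^ d : ℝ) : ℂ) ≠ 0 := by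
        exact_mod_cast ne_of_gt (tpi_pos (d := d))
      rw [Complex.ofReal_inv]
      field_simp
    · intro k hkl
      rw [if_neg hkl, mul_zero]
  · have hlint : ∀ k : Fin d → ℤ,
        (∫⁻ x in box2pi d,
          ‖c k * (ek k x * Complex.exp (-(Complex.I * ∑ j, (l j : ℂ) * (x j : ℂ))))‖₊)
        ≤ (‖c k‖₊ : ENNReal) * volume (box2pi d) := by
      intro k
      have : ∀ x : Fin d → ℝ,
          (‖c k * (ek k x * Complex.exp (-(Complex.I * ∑ j, (l j : ℂ) * (x j : ℂ))))‖₊ : ENNReal)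
            ≤ (‖c k‖₊ : ENNReal) := by
        intro x
        have h2 : ‖c k * (ek k x * Complex.exp (-(Complex.I * ∑ j, (l j : ℂ) * (x j : ℂ))))‖₊
            = ‖c k‖₊ := NNReal.coe_injective (by simpa using hnorm k x)
        exact le_of_eq (by exact_mod_cast h2)
      calc (∫⁻ x in box2pi d, ‖c k * (ek k x * Complex.exp (-(Complex.I * ∑ j, (l j : ℂ) * (x j : ℂ))))‖₊)
          ≤ ∫⁻ _ in box2pi d, (‖c k‖₊ : ENNReal) := MeasureTheory.lintegral_mono fun x => this x
        _ = (‖c k‖₊ : ENNReal) * volume (box2pi d) := by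
            rw [MeasureTheory.lintegral_const, Measure.restrict_apply MeasurableSet.univ,
              Set.univ_inter]
    have hnn : Summable fun k : Fin d → ℤ => ‖c k‖₊ := by
      rw [← NNReal.summable_coe]
      simpa using hcs
    have hvol : volume (box2pi d) ≠ ⊤ := by
      rw [box2pi, MeasureTheory.volume_pi_pi]
      simp [Real.volume_Icc, ENNReal.mul_eq_top]
    refine ne_top_of_le_ne_top ?_ (ENNReal.tsum_le_tsum hlint)
    rw [ENNReal.tsum_mul_right]
    exact ENNReal.mul_ne_top (ENNReal.tsum_coe_ne_top_iff_summable.mpr hnn) hvol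

/-! ### Analytic lemmas -/

lemma single_term_le_exp {x : ℝ} (hx : 0 ≤ x) (n : ℕ) :
    x ^ n / n.factorial ≤ Real.exp x := by
  refine le_trans ?_ (Real.sum_le_exp_of_nonneg hx (n + 1))
  exact Finset.single_le_sum (f := fun i => x ^ i / (i.factorial : ℝ))
    (fun i _ => by positivity) (Finset.self_mem_range_succ n)

lemma pow_le_const_mul_exp {a α : ℝ} (ha : 0 < a) (hα : 1 < α) (n : ℕ) :
    ∃ C : ℝ, 0 < C ∧ ∀ s : ℝ, 0 ≤ s → s ^ n ≤ C * Real.exp (a * s ^ (1/α : ℝ)) := by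
  set N : ℕ := ⌈α * n⌉₊ with hN
  set C : ℝ := max 1 ((N.factorial : ℝ) / a ^ N) with hC
  have hC1 : (1:ℝ) ≤ C := le_max_left _ _
  refine ⟨C, lt_of_lt_of_le one_pos hC1, fun s hs => ?_⟩
  have hα0 : (0:ℝ) < α := lt_trans one_pos hα
  have hexp0 : (0:ℝ) ≤ a * s ^ (1/α : ℝ) := by positivity
  by_cases hs1 : s ≤ 1
  · calc s ^ n ≤ 1 := pow_le_one₀ hs hs1
      _ ≤ C * 1 := by rw [mul_one]; exact hC1
      _ ≤ C * Real.exp (a * s ^ (1/α : ℝ)) := by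
          refine mul_le_mul_of_nonneg_left ?_ (le_trans zero_le_one hC1)
          exact Real.one_le_exp hexp0
  · push_neg at hs1
    set u : ℝ := s ^ (1/α : ℝ) with hu
    have hu0 : 0 ≤ u := Real.rpow_nonneg hs _
    have hu1 : 1 ≤ u := by
      rw [hu]
      calc (1:ℝ) = (1:ℝ) ^ (1/α : ℝ) := (Real.one_rpow _).symm
        _ ≤ s ^ (1/α : ℝ) := Real.rpow_le_rpow zero_le_one hs1.le (by positivity)
    have h1 : s ^ n = u ^ ((α * n : ℝ)) := by
      rw [hu, ← Real.rpow_mul hs]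
      have : (1/α) * (α * n) = (n:ℝ) := by field_simp
      rw [this, Real.rpow_natCast]
    have h2 : u ^ ((α * n : ℝ)) ≤ u ^ ((N : ℝ)) :=
      Real.rpow_le_rpow_of_exponent_le hu1 (Nat.le_ceil _)
    have h3 : u ^ ((N:ℝ)) = u ^ N := Real.rpow_natCast u N
    have h4 : u ^ N ≤ ((N.factorial : ℝ) / a ^ N) * Real.exp (a * u) := by
      have h5 : (a * u) ^ N / (N.factorial : ℝ) ≤ Real.exp (a * u) :=
        single_term_le_exp (by positivity) N
      have h6 : u ^ N = ((a * u) ^ N / (N.factorial : ℝ)) * ((N.factorial : ℝ) / a ^ N) := by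
        rw [mul_pow]
        field_simp
      rw [h6]
      calc ((a * u) ^ N / (N.factorial : ℝ)) * ((N.factorial : ℝ) / a ^ N)
          ≤ Real.exp (a * u) * ((N.factorial : ℝ) / a ^ N) :=
            mul_le_mul_of_nonneg_right h5 (by positivity)
        _ = ((N.factorial : ℝ) / a ^ N) * Real.exp (a * u) := by ring
    calc s ^ n = u ^ ((α * n : ℝ)) := h1
      _ ≤ u ^ ((N:ℝ)) := h2
      _ = u ^ N := h3
      _ ≤ ((N.factorial : ℝ) / a ^ N) * Real.exp (a * u) := h4
      _ ≤ C * Real.exp (a * u) := by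
          refine mul_le_mul_of_nonneg_right (le_max_right _ _) (Real.exp_nonneg _)

lemma tsum_exp_series (x : ℝ) : ∑' n : ℕ, x ^ n / (n.factorial : ℝ) = Real.exp x := by
  rw [Real.exp_eq_exp_ℝ, NormedSpace.exp_eq_tsum_div]

lemma gevrey_series_bound {α L : ℝ} (hα : 1 < α) (hL : 0 < L) {t : ℝ} (ht : 0 ≤ t) :
    Summable (fun n : ℕ => ((L ^ n / (n.factorial : ℝ)) ^ (α : ℝ)) * t ^ n) ∧
    ∑' n : ℕ, ((L ^ n / (n.factorial : ℝ)) ^ (α : ℝ)) * t ^ n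
      ≤ Real.exp (α * (L * t ^ (1/α : ℝ))) := by
  have hα0 : (0:ℝ) < α := lt_trans one_pos hα
  set x : ℝ := L * t ^ (1/α : ℝ) with hx
  have hx0 : 0 ≤ x := by positivity
  set a : ℕ → ℝ := fun n => x ^ n / (n.factorial : ℝ) with ha
  have ha0 : ∀ n, 0 ≤ a n := fun n => by positivity
  have hterm : ∀ n : ℕ, ((L ^ n / (n.factorial : ℝ)) ^ (α : ℝ)) * t ^ n = (a n) ^ (α : ℝ) := by
    intro n
    have ht1 : t ^ n = ((t ^ (1/α : ℝ)) ^ n) ^ (α : ℝ) := by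
      rw [← Real.rpow_natCast (t ^ (1/α : ℝ)) n, ← Real.rpow_mul ht, ← Real.rpow_mul ht]
      have : (1/α) * n * α = (n : ℝ) := by field_simp
      rw [this, Real.rpow_natCast]
    rw [ht1, ← Real.mul_rpow (by positivity) (by positivity)]
    congr 1
    rw [ha]
    simp only [mul_pow]
    field_simp
    ring
  have hle : ∀ n : ℕ, (a n) ^ (α : ℝ) ≤ Real.exp (x * (α - 1)) * a n := by
    intro n
    rcases eq_or_lt_of_le (ha0 n) with h0 | hpos
    · rw [← h0, Real.zero_rpow (ne_of_gt hα0), mul_zero]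
    · have h1 : (a n) ^ (α : ℝ) = (a n) ^ (α - 1 : ℝ) * a n := by
        rw [← Real.rpow_add_one (ne_of_gt hpos)]
        ring_nf
      rw [h1]
      refine mul_le_mul_of_nonneg_right ?_ (ha0 n)
      calc (a n) ^ (α - 1 : ℝ) ≤ (Real.exp x) ^ (α - 1 : ℝ) :=
            Real.rpow_le_rpow (ha0 n) (single_term_le_exp hx0 n) (by linarith)
        _ = Real.exp (x * (α - 1)) := (Real.exp_mul x (α - 1)).symm
  have hsum_a : Summable a := Real.summable_pow_div_factorial x
  have hsum_bound : Summable (fun n => Real.exp (x * (α - 1)) * a n) := hsum_a.mul_left _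
  have hsum : Summable (fun n : ℕ => ((L ^ n / (n.factorial : ℝ)) ^ (α : ℝ)) * t ^ n) := by
    refine Summable.of_nonneg_of_le (fun n => ?_) (fun n => ?_) hsum_bound
    · rw [hterm n]; exact Real.rpow_nonneg (ha0 n) _
    · rw [hterm n]; exact hle n
  refine ⟨hsum, ?_⟩
  calc ∑' n : ℕ, ((L ^ n / (n.factorial : ℝ)) ^ (α : ℝ)) * t ^ n
      = ∑' n : ℕ, (a n) ^ (α : ℝ) := tsum_congr hterm
    _ ≤ ∑' n : ℕ, Real.exp (x * (α - 1)) * a n := by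
        refine Summable.tsum_le_tsum hle ?_ hsum_bound
        exact hsum.congr hterm
    _ = Real.exp (x * (α - 1)) * Real.exp x := by
        rw [tsum_mul_left, ha, tsum_exp_series]
    _ = Real.exp (α * x) := by
        rw [← Real.exp_add]
        ring_nf
    _ = Real.exp (α * (L * t ^ (1/α : ℝ))) := by rw [hx]

set_option maxHeartbeats 1000000 in
lemma pi_tsum_prod : ∀ {n : ℕ} (g : Fin n → ℕ → ℝ), (∀ j i, 0 ≤ g j i) →
    (∀ j, Summable (g j)) →
    Summable (fun m : Fin n → ℕ => ∏ j, g j (m j)) ∧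
    ∑' m : Fin n → ℕ, ∏ j, g j (m j) = ∏ j, ∑' i, g j i := by
  intro n
  induction n with
  | zero =>
      intro g hg hs
      constructor
      · exact Summable.of_finite
      · rw [tsum_eq_single (fun i => 0) (fun b hb => absurd (Subsingleton.elim b _) hb)]
        simp
  | succ n ih =>
      intro g hg hs
      set e : ℕ × (Fin n → ℕ) ≃ (Fin (n+1) → ℕ) := Fin.consEquiv (fun _ => ℕ) with he
      obtain ⟨ihS, ihT⟩ := ih (fun i => g i.succ) (fun j i => hg _ _) (fun j => hs _)
      have hcomp : ∀ z : ℕ × (Fin n → ℕ),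
          (∏ j, g j ((e z) j)) = g 0 z.1 * ∏ i, g i.succ (z.2 i) := by
        intro z
        obtain ⟨x, p⟩ := z
        rw [Fin.prod_univ_succ]
        simp [he, Fin.consEquiv]
      have h0f : (0 : ℕ → ℝ) ≤ g 0 := fun i => hg 0 i
      have h0T : (0 : (Fin n → ℕ) → ℝ) ≤ fun p : Fin n → ℕ => ∏ i, g i.succ (p i) :=
        fun p => Finset.prod_nonneg fun i _ => hg _ _
      have hprodsum0 := Summable.mul_of_nonneg (hs 0) ihS h0f h0T
      have hprodsum : Summable (fun z : ℕ × (Fin n → ℕ) => g 0 z.1 * ∏ i, g i.succ (z.2 i)) :=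
        hprodsum0
      have hS : Summable (fun m : Fin (n+1) → ℕ => ∏ j, g j (m j)) := by
        rw [← e.summable_iff]
        exact hprodsum.congr fun z => (hcomp z).symm
      refine ⟨hS, ?_⟩
      rw [← e.tsum_eq (fun m => ∏ j, g j (m j)), tsum_congr hcomp]
      have habs : ∀ {κ : Type} (h : κ → ℝ), (∀ i, 0 ≤ h i) → Summable h →
          Summable (fun i => ‖h i‖) := by
        intro κ h h0 hsum
        simpa [Real.norm_eq_abs] using hsum.abs
      rw [← tsum_mul_tsum_of_summable_norm (habs _ (fun i => hg 0 i) (hs 0))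
        (habs _ (fun p => Finset.prod_nonneg fun i _ => hg _ _) ihS)]
      rw [ihT, Fin.prod_univ_succ]

/-! ### Periodicity -/

/-- One-step periodicity in every coordinate. -/
def PerStep (g : (Fin d → ℝ) → ℂ) : Prop :=
  ∀ (x : Fin d → ℝ) (j : Fin d), g (x + (2 * Real.pi) • (Pi.single j 1 : Fin d → ℝ)) = g x

lemma smul_single_eq (j : Fin d) :
    (2 * Real.pi) • (Pi.single j 1 : Fin d → ℝ) = Pi.single j (2 * Real.pi) := by
  funext i
  by_cases hij : i = j <;> simp [Pi.single_apply, hij]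

lemma PerStep.step {g : (Fin d → ℝ) → ℂ} (hg : PerStep g) (x : Fin d → ℝ) (j : Fin d) :
    g (x + Pi.single j (2 * Real.pi)) = g x := by
  rw [← smul_single_eq]; exact hg x j

lemma PerStep.int {g : (Fin d → ℝ) → ℂ} (hg : PerStep g) (j : Fin d) (z : ℤ)
    (x : Fin d → ℝ) : g (x + Pi.single j (2 * Real.pi * z)) = g x := by
  induction z using Int.induction_on with
  | zero => simp
  | succ i ih =>
      have h1 : (Pi.single j (2 * Real.pi * (((i : ℤ) + 1 : ℤ) : ℝ)) : Fin d → ℝ)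
          = Pi.single j (2 * Real.pi * ((i : ℤ) : ℝ)) + Pi.single j (2 * Real.pi) := by
        rw [← Pi.single_add]
        congr 1
        push_cast
        ring
      rw [h1, ← add_assoc, hg.step, ih]
  | pred i ih =>
      have h1 : (Pi.single j (2 * Real.pi * (((-(i : ℤ) - 1 : ℤ)) : ℝ)) : Fin d → ℝ)
            + Pi.single j (2 * Real.pi)
          = Pi.single j (2 * Real.pi * ((-(i:ℤ) : ℤ) : ℝ)) := by
        rw [← Pi.single_add]
        congr 1
        push_cast
        ring
      have h2 := hg.step (x + Pi.single j (2 * Real.pi * (((-(i:ℤ) - 1 : ℤ)) : ℝ))) j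
      rw [add_assoc, h1] at h2
      rw [h2] at ih
      exact ih

lemma PerStep.intmul {g : (Fin d → ℝ) → ℂ} (hg : PerStep g) (n : Fin d → ℤ)
    (x : Fin d → ℝ) : g (x + fun j => 2 * Real.pi * n j) = g x := by
  have key : ∀ l : List (Fin d), l.Nodup → ∀ x : Fin d → ℝ,
      g (x + fun i => if i ∈ l then 2 * Real.pi * n i else 0) = g x := by
    intro l hl
    induction l with
    | nil =>
        intro x
        have hx : (x + fun i => if i ∈ ([] : List (Fin d)) then 2 * Real.pi * n i else 0) = x := by
          funext i; simp
        rw [hx]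
    | cons j t ih =>
        intro x
        have hj : j ∉ t := (List.nodup_cons.mp hl).1
        have hsplit : (fun i => if i ∈ j :: t then 2 * Real.pi * n i else 0)
            = (fun i => if i ∈ t then 2 * Real.pi * n i else 0)
              + Pi.single j (2 * Real.pi * n j) := by
          funext i
          by_cases hij : i = j
          · subst hij
            simp [Pi.single_apply, hj]
          · by_cases hit : i ∈ t <;> simp [Pi.single_apply, hij, hit]
        rw [hsplit, ← add_assoc, hg.int j (n j), ih (List.nodup_cons.mp hl).2]
  have h := key (List.finRange d) (List.nodup_finRange d) x
  have h2 : (fun i => if i ∈ List.finRange d then 2 * Real.pi * n i else 0)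
      = fun i => 2 * Real.pi * n i := by
    funext i; simp [List.mem_finRange]
  rw [h2] at h
  exact h

lemma perStep_ek (k : Fin d → ℤ) : ∀ (x : Fin d → ℝ) (j : Fin d),
    ek k (x + (2 * Real.pi) • (Pi.single j 1 : Fin d → ℝ)) = ek k x := by
  intro x j
  rw [smul_single_eq, ek, ek]
  have h : ∀ i : Fin d, (k i : ℂ) * (((x + Pi.single j (2 * Real.pi) : Fin d → ℝ) i : ℝ) : ℂ)
      = (k i : ℂ) * (x i : ℂ) + (if i = j then (k j : ℂ) * ((2 * Real.pi : ℝ) : ℂ) else 0) := by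
    intro i
    by_cases hij : i = j
    · subst hij
      rw [Pi.add_apply, Pi.single_eq_same, if_pos rfl]
      push_cast
      ring
    · rw [Pi.add_apply, Pi.single_eq_of_ne hij, if_neg hij, add_zero, add_zero]
  rw [Finset.sum_congr rfl fun i _ => h i, Finset.sum_add_distrib,
    Finset.sum_ite_eq' Finset.univ j fun _ => (k j : ℂ) * ((2 * Real.pi : ℝ) : ℂ)]
  simp only [Finset.mem_univ, if_true]
  rw [mul_add, Complex.exp_add]
  have h2 : Complex.exp (Complex.I * ((k j : ℂ) * ((2 * Real.pi : ℝ) : ℂ))) = 1 := by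
    have := Complex.exp_int_mul_two_pi_mul_I (k j)
    rw [← this]
    congr 1
    push_cast
    ring
  rw [h2, mul_one]

lemma perStep_P (hs : SummableW c) (m : Fin d → ℕ) : PerStep (P c m) := by
  intro x j
  unfold P
  exact tsum_congr fun k => by rw [perStep_ek k x j]

/-! ### The torus and Stone–Weierstrass -/

section Torus

open AddCircle Submodule

instance : Fact (0 < 2 * Real.pi) := ⟨Real.two_pi_pos⟩

/-- Projection from `ℝ^d` to the `d`-torus. -/
def tproj : (Fin d → ℝ) → (Fin d → AddCircle (2 * Real.pi)) :=
  fun x j => (x j : AddCircle (2 * Real.pi))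

lemma tproj_oqm : IsOpenQuotientMap (tproj (d := d)) :=
  IsOpenQuotientMap.piMap fun _ => QuotientAddGroup.isOpenQuotientMap_mk

/-- Characters of the torus. -/
def tchar (k : Fin d → ℤ) : C(Fin d → AddCircle (2 * Real.pi), ℂ) :=
  ∏ j, (fourier (k j)).comp ⟨fun y => y j, continuous_apply j⟩

lemma tchar_apply (k : Fin d → ℤ) (y : Fin d → AddCircle (2 * Real.pi)) :
    tchar k y = ∏ j, fourier (k j) (y j) := by
  simp [tchar]

lemma tchar_tproj (k : Fin d → ℤ) (x : Fin d → ℝ) :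
    tchar k (tproj x) = ek k x := by
  rw [tchar_apply, ek]
  have h : ∀ j : Fin d, fourier (k j) (tproj x j)
      = Complex.exp (Complex.I * ((k j : ℂ) * ((x j : ℝ) : ℂ))) := by
    intro j
    show fourier (k j) ((x j : ℝ) : AddCircle (2 * Real.pi)) = _
    rw [fourier_coe_apply]
    congr 1
    have hπ : (Real.pi : ℂ) ≠ 0 := Complex.ofReal_ne_zero.mpr Real.pi_ne_zero
    field_simp
    push_cast
    ring
  rw [Finset.prod_congr rfl fun j _ => h j, ← Complex.exp_sum, ← Finset.mul_sum]

lemma tchar_zero : tchar (d := d) 0 = 1 := by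
  ext y
  rw [tchar_apply]
  simp [fourier_zero]

lemma tchar_add (k l : Fin d → ℤ) : tchar (k + l) = tchar k * tchar l := by
  ext y
  rw [ContinuousMap.mul_apply, tchar_apply, tchar_apply, tchar_apply, ← Finset.prod_mul_distrib]
  refine Finset.prod_congr rfl fun j _ => ?_
  rw [Pi.add_apply, fourier_add]

lemma tchar_star (k : Fin d → ℤ) : star (tchar k) = tchar (-k) := by
  ext y
  rw [ContinuousMap.star_apply, tchar_apply, tchar_apply, star_prod]
  refine Finset.prod_congr rfl fun j _ => ?_
  rw [Pi.neg_apply]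
  exact (fourier_neg (n := k j) (x := y j)).symm

/-- The star subalgebra generated by the torus characters. -/
def torusAlg : StarSubalgebra ℂ C(Fin d → AddCircle (2 * Real.pi), ℂ) where
  toSubalgebra := Algebra.adjoin ℂ (Set.range (tchar (d := d)))
  star_mem' := by
    show Algebra.adjoin ℂ (Set.range (tchar (d := d))) ≤
      star (Algebra.adjoin ℂ (Set.range (tchar (d := d))))
    refine Algebra.adjoin_le ?_
    rintro - ⟨k, rfl⟩
    exact Algebra.subset_adjoin ⟨-k, (tchar_star k).symm⟩

lemma torusAlg_coe :
    Subalgebra.toSubmodule (torusAlg (d := d)).toSubalgebra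
      = span ℂ (Set.range (tchar (d := d))) := by
  apply Algebra.adjoin_eq_span_of_subset
  refine Set.Subset.trans ?_ Submodule.subset_span
  intro x hx
  refine Submonoid.closure_induction (fun _ => id) ⟨0, tchar_zero⟩ ?_ hx
  rintro - - - - ⟨m, rfl⟩ ⟨n, rfl⟩
  exact ⟨m + n, tchar_add m n⟩

lemma torusAlg_separates : (torusAlg (d := d)).SeparatesPoints := by
  intro y z hyz
  obtain ⟨j, hj⟩ := Function.ne_iff.mp hyz
  refine ⟨_, ⟨tchar (Pi.single j 1), Algebra.subset_adjoin ⟨Pi.single j 1, rfl⟩, rfl⟩, ?_⟩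
  dsimp only
  have hval : ∀ w : Fin d → AddCircle (2 * Real.pi), tchar (Pi.single j 1) w = toCircle (w j) := by
    intro w
    rw [tchar_apply]
    rw [Finset.prod_eq_single j]
    · rw [Pi.single_eq_same, fourier_one]
    · intro i _ hij
      rw [Pi.single_eq_of_ne hij]
      exact fourier_zero
    · simp
  rw [hval, hval]
  intro hc
  rw [Circle.coe_inj] at hc
  exact hj (injective_toCircle Real.two_pi_pos.ne' hc)

lemma torus_span_dense :
    (span ℂ (Set.range (tchar (d := d)))).topologicalClosure = ⊤ := by
  rw [← torusAlg_coe]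
  exact congr_arg (Subalgebra.toSubmodule <| StarSubalgebra.toSubalgebra ·)
    (ContinuousMap.starSubalgebra_topologicalClosure_eq_top_of_separatesPoints _
      torusAlg_separates)

end Torus

/-! ### Uniqueness -/

section Uniqueness

open Submodule

lemma box_compact : IsCompact (box2pi d) := isCompact_univ_pi fun _ => isCompact_Icc

lemma volume_box_ne_top : volume (box2pi d) ≠ ⊤ := by
  rw [box2pi, MeasureTheory.volume_pi_pi]
  simp [Real.volume_Icc, ENNReal.mul_eq_top]

lemma integrableOn_box {u : (Fin d → ℝ) → ℂ} (hu : Continuous u) :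
    IntegrableOn u (box2pi d) :=
  ContinuousOn.integrableOn_compact box_compact hu.continuousOn

lemma integrableOn_box_real {u : (Fin d → ℝ) → ℝ} (hu : Continuous u) :
    IntegrableOn u (box2pi d) :=
  ContinuousOn.integrableOn_compact box_compact hu.continuousOn

theorem eq_zero_of_coef_zero {h : (Fin d → ℝ) → ℂ} (hcont : Continuous h) (hper : PerStep h)
    (hcoef : ∀ k : Fin d → ℤ, ∫ x in box2pi d, h x * ek k x = 0) :
    ∀ x, h x = 0 := by
  classical
  -- representative formula
  have hrep : ∀ x : Fin d → ℝ,
      (fun j => ((AddCircle.equivIco (2 * Real.pi) 0 (tproj x j) : ℝ)))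
        = x + fun j => 2 * Real.pi * ((-⌊x j / (2 * Real.pi)⌋ : ℤ) : ℝ) := by
    intro x
    funext j
    show ((AddCircle.equivIco (2 * Real.pi) 0 ((x j : ℝ) : AddCircle (2 * Real.pi))) : ℝ) = _
    rw [AddCircle.coe_equivIco_mk_apply, Int.fract, Pi.add_apply]
    have h2π : (2 * Real.pi) ≠ 0 := Real.two_pi_pos.ne'
    push_cast
    field_simp
    ring
  -- descended function
  set Hfun : (Fin d → AddCircle (2 * Real.pi)) → ℂ :=
    fun y => h (fun j => ((AddCircle.equivIco (2 * Real.pi) 0 (y j) : ℝ))) with hHfun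
  have hHt : ∀ x, Hfun (tproj x) = h x := by
    intro x
    show h _ = h x
    rw [hrep x]
    exact hper.intmul _ x
  have hHcont : Continuous Hfun := by
    refine (tproj_oqm (d := d)).continuous_comp_iff.mp ?_
    have : Hfun ∘ tproj = h := funext hHt
    rw [this]
    exact hcont
  set H : C(Fin d → AddCircle (2 * Real.pi), ℂ) := ⟨Hfun, hHcont⟩ with hH
  -- integrability helper
  have hIntg : ∀ g : C(Fin d → AddCircle (2 * Real.pi), ℂ),
      IntegrableOn (fun x => h x * g (tproj x)) (box2pi d) := fun g =>
    integrableOn_box (hcont.mul (g.continuous.comp tproj_oqm.continuous))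
  -- vanishing against the span of characters
  have hspan : ∀ p ∈ span ℂ (Set.range (tchar (d := d))),
      ∫ x in box2pi d, h x * p (tproj x) = 0 := by
    intro p hp
    induction hp using Submodule.span_induction with
    | mem p hp =>
        obtain ⟨k, rfl⟩ := hp
        simp only [tchar_tproj]
        exact hcoef k
    | zero => simp
    | add p q hp hq ihp ihq =>
        have hsplit : (fun x => h x * (p + q) (tproj x))
            = fun x => h x * p (tproj x) + h x * q (tproj x) := by
          funext x
          rw [ContinuousMap.add_apply]
          ring
        rw [hsplit, MeasureTheory.integral_add (hIntg p) (hIntg q), ihp, ihq, add_zero]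
    | smul a p hp ihp =>
        have hsplit : (fun x => h x * (a • p) (tproj x))
            = fun x => a * (h x * p (tproj x)) := by
          funext x
          rw [ContinuousMap.smul_apply, smul_eq_mul]
          ring
        rw [hsplit, MeasureTheory.integral_const_mul, ihp, mul_zero]
  -- the L² mass
  set r : ℝ := ∫ x in box2pi d, Complex.normSq (h x) with hr
  have hI : ∫ x in box2pi d, h x * (star H) (tproj x) = (r : ℂ) := by
    have h1 : ∀ x : Fin d → ℝ, h x * (star H) (tproj x) = ((Complex.normSq (h x) : ℝ) : ℂ) := by
      intro x
      rw [ContinuousMap.star_apply]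
      show h x * star (Hfun (tproj x)) = _
      rw [hHt x, ← Complex.mul_conj]
      rfl
    rw [MeasureTheory.setIntegral_congr_fun measurableSet_box (fun x _ => h1 x)]
    exact integral_ofReal
  set B : ℝ := ∫ x in box2pi d, ‖h x‖ with hB
  have hBnonneg : 0 ≤ B := MeasureTheory.integral_nonneg fun x => norm_nonneg _
  have hmem : (star H) ∈ closure ((span ℂ (Set.range (tchar (d := d))) : Submodule ℂ _) :
      Set C(Fin d → AddCircle (2 * Real.pi), ℂ)) := by
    rw [← Submodule.topologicalClosure_coe, torus_span_dense]
    trivial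
  have habs : ∀ ε : ℝ, 0 < ε → |r| ≤ B * ε := by
    intro ε hε
    obtain ⟨p, hpmem, hdist⟩ := Metric.mem_closure_iff.mp hmem ε hε
    have hsplit : (fun x => h x * (star H) (tproj x))
        = fun x => h x * p (tproj x) + h x * ((star H - p) (tproj x)) := by
      funext x
      rw [ContinuousMap.sub_apply]
      ring
    have heq : (r : ℂ) = ∫ x in box2pi d, h x * ((star H - p) (tproj x)) := by
      rw [← hI, hsplit, MeasureTheory.integral_add (hIntg p) (hIntg (star H - p)),
        hspan p hpmem, zero_add]
    have hbound : ∀ x : Fin d → ℝ, ‖h x * ((star H - p) (tproj x))‖ ≤ ‖h x‖ * ε := by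
      intro x
      rw [norm_mul]
      refine mul_le_mul_of_nonneg_left ?_ (norm_nonneg _)
      have h2 : ‖(star H - p) (tproj x)‖ = dist ((star H) (tproj x)) (p (tproj x)) := by
        rw [ContinuousMap.sub_apply, dist_eq_norm]
      rw [h2]
      exact le_of_lt (lt_of_le_of_lt (ContinuousMap.dist_apply_le_dist _) hdist)
    calc |r| = ‖(r : ℂ)‖ := by rw [Complex.norm_real, Real.norm_eq_abs]
      _ = ‖∫ x in box2pi d, h x * ((star H - p) (tproj x))‖ := by rw [heq]
      _ ≤ ∫ x in box2pi d, ‖h x * ((star H - p) (tproj x))‖ :=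
          MeasureTheory.norm_integral_le_integral_norm _
      _ ≤ ∫ x in box2pi d, ‖h x‖ * ε := by
          refine MeasureTheory.integral_mono ((hIntg (star H - p)).norm) ?_ hbound
          exact (integrableOn_box_real (hcont.norm.mul continuous_const))
      _ = B * ε := by rw [MeasureTheory.integral_mul_const]
  have hr0 : r = 0 := by
    by_contra hrne
    have habs0 : 0 < |r| := abs_pos.mpr hrne
    have hB1 : 0 < B + 1 := by linarith
    set q : ℝ := |r| / (2 * (B + 1)) with hq
    have hq0 : 0 < q := by positivity
    have hqeq : 2 * (B + 1) * q = |r| := by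
      rw [hq]
      field_simp
    have := habs q hq0
    nlinarith
  -- h vanishes on the interior of the box
  have hgcont : Continuous fun x : Fin d → ℝ => Complex.normSq (h x) :=
    Complex.continuous_normSq.comp hcont
  have hint0 : ∀ x ∈ interior (box2pi d), h x = 0 := by
    intro x₀ hx₀
    by_contra hne
    have hc : 0 < Complex.normSq (h x₀) := Complex.normSq_pos.mpr hne
    set U : Set (Fin d → ℝ) := interior (box2pi d) ∩
      (fun x => Complex.normSq (h x)) ⁻¹' Set.Ioi (Complex.normSq (h x₀) / 2) with hU
    have hUopen : IsOpen U := isOpen_interior.inter (isOpen_Ioi.preimage hgcont)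
    have hUne : U.Nonempty := ⟨x₀, hx₀, by simp only [Set.mem_preimage, Set.mem_Ioi]; linarith⟩
    have hUsub : U ⊆ box2pi d := fun x hx => interior_subset hx.1
    have hvolU : 0 < volume U := hUopen.measure_pos volume hUne
    have hvolU_ne : volume U ≠ ⊤ :=
      ne_top_of_le_ne_top volume_box_ne_top (measure_mono hUsub)
    have hIntsq : IntegrableOn (fun x => Complex.normSq (h x)) (box2pi d) :=
      integrableOn_box_real hgcont
    have h1 : Complex.normSq (h x₀) / 2 * (volume U).toReal
        ≤ ∫ x in U, Complex.normSq (h x) := by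
      refine (mul_comm _ _).trans_le (setIntegral_ge_of_const_le hUopen.measurableSet hvolU_ne
        (fun x hx => le_of_lt hx.2) (hIntsq.mono_set hUsub))
    have h2 : ∫ x in U, Complex.normSq (h x) ≤ r := by
      refine setIntegral_mono_set hIntsq ?_ (HasSubset.Subset.eventuallyLE hUsub)
      exact Filter.Eventually.of_forall fun x => Complex.normSq_nonneg _
    have h3 : 0 < (volume U).toReal := ENNReal.toReal_pos hvolU.ne' hvolU_ne
    nlinarith
  -- extend to the closed box by continuity
  have hbox : ∀ x ∈ box2pi d, h x = 0 := by
    have hsub : box2pi d ⊆ closure (interior (box2pi d)) := by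
      rw [box2pi, interior_pi_set Set.finite_univ]
      intro x hx
      rw [Set.mem_pi] at hx
      have : x ∈ Set.pi Set.univ fun _ : Fin d => closure (interior (Set.Icc (0:ℝ) (2 * Real.pi))) := by
        intro j hj
        rw [interior_Icc, closure_Ioo (ne_of_lt Real.two_pi_pos)]
        exact hx j hj
      rw [closure_pi_set]
      exact this
    intro x hx
    have hker : IsClosed {y : Fin d → ℝ | h y = 0} := isClosed_eq hcont continuous_const
    exact closure_minimal hint0 hker (hsub hx)
  -- extend to all of ℝ^d by periodicity
  intro x
  set n : Fin d → ℤ := fun j => -⌊x j / (2 * Real.pi)⌋ with hn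
  have heqy : ∀ j, x j + 2 * Real.pi * ((n j : ℤ) : ℝ)
      = 2 * Real.pi * Int.fract (x j / (2 * Real.pi)) := by
    intro j
    rw [hn, Int.fract]
    have h2π : (2 * Real.pi) ≠ 0 := Real.two_pi_pos.ne'
    push_cast
    field_simp
    ring
  have hy : (x + fun j => 2 * Real.pi * ((n j : ℤ) : ℝ)) ∈ box2pi d := by
    rw [box2pi, Set.mem_pi]
    intro j _
    rw [Pi.add_apply, heqy j]
    constructor
    · have := Int.fract_nonneg (x j / (2 * Real.pi))
      positivity
    · have hlt := Int.fract_lt_one (x j / (2 * Real.pi))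
      nlinarith [Real.two_pi_pos]
  have hperx := hper.intmul n x
  rw [← hperx]
  exact hbox _ hy

end Uniqueness

/-! ### Final assembly helpers -/

lemma fourierCoef_sub {f g : (Fin d → ℝ) → ℂ} (hf : Continuous f) (hg : Continuous g)
    (l : Fin d → ℤ) :
    fourierCoef (fun x => f x - g x) l = fourierCoef f l - fourierCoef g l := by
  unfold fourierCoef
  rw [← smul_sub]
  congr 1
  have hintf : IntegrableOn
      (fun x => f x * Complex.exp (-(Complex.I * ∑ j, (l j : ℂ) * (x j : ℂ)))) (box2pi d) :=
    integrableOn_box (hf.mul (Complex.continuous_exp.comp (by continuity)))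
  have hintg : IntegrableOn
      (fun x => g x * Complex.exp (-(Complex.I * ∑ j, (l j : ℂ) * (x j : ℂ)))) (box2pi d) :=
    integrableOn_box (hg.mul (Complex.continuous_exp.comp (by continuity)))
  rw [← MeasureTheory.integral_sub hintf hintg]
  refine MeasureTheory.setIntegral_congr_fun measurableSet_box fun x _ => ?_
  ring

lemma summableW_of_exp {α L : ℝ} (hα : 1 < α) (hL : 0 < L) {c : (Fin d → ℤ) → ℂ}
    (hFsum : Summable fun k : Fin d → ℤ =>
      Real.exp (α * L * ∑ j, |(k j : ℝ)| ^ (1 / α : ℝ)) * ‖c k‖) :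
    SummableW c := by
  intro m
  have haL : 0 < α * L := mul_pos (lt_trans one_pos hα) hL
  choose C hCpos hCle using fun j : Fin d => pow_le_const_mul_exp haL hα (m j)
  refine (hFsum.mul_left (∏ j, C j)).of_nonneg_of_le
    (fun k => mul_nonneg (wt_nonneg m k) (norm_nonneg _)) fun k => ?_
  have h1 : wt m k ≤ (∏ j, C j) * Real.exp (α * L * ∑ j, |(k j : ℝ)| ^ (1 / α : ℝ)) := by
    calc wt m k ≤ ∏ j, (C j * Real.exp (α * L * |(k j : ℝ)| ^ (1 / α : ℝ))) := by
          refine Finset.prod_le_prod (fun j _ => by positivity) fun j _ => ?_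
          exact hCle j _ (abs_nonneg _)
      _ = (∏ j, C j) * ∏ j, Real.exp (α * L * |(k j : ℝ)| ^ (1 / α : ℝ)) :=
          Finset.prod_mul_distrib
      _ = (∏ j, C j) * Real.exp (α * L * ∑ j, |(k j : ℝ)| ^ (1 / α : ℝ)) := by
          rw [← Real.exp_sum, ← Finset.mul_sum]
  calc wt m k * ‖c k‖
      ≤ ((∏ j, C j) * Real.exp (α * L * ∑ j, |(k j : ℝ)| ^ (1 / α : ℝ))) * ‖c k‖ :=
        mul_le_mul_of_nonneg_right h1 (norm_nonneg _)
    _ = (∏ j, C j) * (Real.exp (α * L * ∑ j, |(k j : ℝ)| ^ (1 / α : ℝ)) * ‖c k‖) := by ring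

lemma summable_norm_term (hs : SummableW c) (m : Fin d → ℕ) (x : Fin d → ℝ) :
    Summable fun k => ‖coefw m k * c k * ek k x‖ :=
  (hs m).congr fun k => by rw [norm_mul, norm_mul, norm_coefw, norm_ek, mul_one]

lemma norm_P_le (hs : SummableW c) (m : Fin d → ℕ) (x : Fin d → ℝ) :
    ‖P c m x‖ ≤ ∑' k, wt m k * ‖c k‖ := by
  rw [P]
  refine le_trans (norm_tsum_le_tsum_norm (summable_norm_term hs m x)) (le_of_eq ?_)
  exact tsum_congr fun k => by rw [norm_mul, norm_mul, norm_coefw, norm_ek, mul_one]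

lemma box_nonempty : (box2pi d).Nonempty := by
  refine ⟨0, ?_⟩
  rw [box2pi, Set.mem_pi]
  intro j _
  exact ⟨le_refl _, by positivity⟩

lemma supOn_box_le {ψ : (Fin d → ℝ) → ℂ} {Mb : ℝ} (hb : ∀ x ∈ box2pi d, ‖ψ x‖ ≤ Mb) :
    supOn (box2pi d) ψ ≤ Mb := by
  refine Real.sSup_le ?_ ?_
  · rintro - ⟨x, hx, rfl⟩
    exact hb x hx
  · obtain ⟨x0, hx0⟩ := box_nonempty (d := d)
    exact le_trans (norm_nonneg _) (hb x0 hx0)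

lemma supOn_box_nonneg (ψ : (Fin d → ℝ) → ℂ) : 0 ≤ supOn (box2pi d) ψ := by
  refine Real.sSup_nonneg ?_
  rintro - ⟨x, hx, rfl⟩
  exact norm_nonneg _

end GF
/-- `‖f‖_{α,L} ≤ ‖f‖_{𝓕_{α,L}}`. -/
theorem gevrey_le_fourier_weighted_norm {d : ℕ} (hd : 1 ≤ d)
    {α L : ℝ} (hα : 1 < α) (hL : 0 < L)
    (f : (Fin d → ℝ) → ℂ) (hf : ContDiff ℝ (⊤ : ℕ∞) f)
    (hper : ∀ (x : Fin d → ℝ) (j : Fin d),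
      f (x + (2 * Real.pi) • (Pi.single j 1 : Fin d → ℝ)) = f x)
    (hFsum : Summable (fun k : Fin d → ℤ =>
      Real.exp (α * L * ∑ j, |(k j : ℝ)| ^ (1 / α)) * ‖fourierCoef f k‖)) :
    Summable (gevreyTerm α (fun _ => L) (box2pi d) f) ∧
      ∑' m, gevreyTerm α (fun _ => L) (box2pi d) f m ≤
        ∑' k : Fin d → ℤ,
          Real.exp (α * L * ∑ j, |(k j : ℝ)| ^ (1 / α)) * ‖fourierCoef f k‖ := by
  classical
  set c : (Fin d → ℤ) → ℂ := fourierCoef f with hc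
  have hsW : GF.SummableW c := GF.summableW_of_exp hα hL hFsum
  -- Fourier inversion : `f = GF.P c 0`
  have hfP : f = GF.P c 0 := by
    have hsubcont : Continuous fun x => f x - GF.P c 0 x :=
      (hf.continuous).sub (GF.continuous_P hsW 0)
    have hsubper : GF.PerStep (fun x => f x - GF.P c 0 x) := by
      intro x j
      simp only
      rw [hper x j, GF.perStep_P hsW 0 x j]
    have hcoefzero : ∀ k : Fin d → ℤ,
        ∫ x in box2pi d, (f x - GF.P c 0 x) * GF.ek k x = 0 := by
      intro k
      have h1 : fourierCoef (fun x => f x - GF.P c 0 x) (-k) = 0 := by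
        rw [GF.fourierCoef_sub hf.continuous (GF.continuous_P hsW 0),
          GF.fourierCoef_P hsW, ← hc]
        simp
      rw [fourierCoef] at h1
      have h2 : (((2 * Real.pi) ^ d : ℝ))⁻¹ ≠ 0 := by positivity
      have h3 := (smul_eq_zero.mp h1).resolve_left h2
      rw [← h3]
      refine MeasureTheory.setIntegral_congr_fun GF.measurableSet_box fun x _ => ?_
      congr 1
      rw [GF.exp_neg_eq_ek, neg_neg]
    have hzero := GF.eq_zero_of_coef_zero hsubcont hsubper hcoefzero
    funext x
    exact sub_eq_zero.mp (hzero x)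
  -- coefficient notation
  set Bm : (Fin d → ℕ) → ℝ :=
    fun m => ((∏ j, L ^ m j) / ∏ j, ((m j).factorial : ℝ)) ^ (α : ℝ) with hBm
  have hBm_nonneg : ∀ m, 0 ≤ Bm m := fun m => Real.rpow_nonneg (by positivity) _
  have hfactor : ∀ (m : Fin d → ℕ) (k : Fin d → ℤ),
      Bm m * GF.wt m k
        = ∏ j, ((L ^ m j / ((m j).factorial : ℝ)) ^ (α : ℝ) * |(k j : ℝ)| ^ m j) := by
    intro m k
    rw [hBm]
    simp only
    rw [← Finset.prod_div_distrib,
      ← Real.finset_prod_rpow Finset.univ _ (fun j _ => by positivity) α, GF.wt,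
      ← Finset.prod_mul_distrib]
  have hkfact : ∀ k : Fin d → ℤ,
      Summable (fun m : Fin d → ℕ => Bm m * GF.wt m k) ∧
      ∑' m : Fin d → ℕ, Bm m * GF.wt m k
        ≤ Real.exp (α * L * ∑ j, |(k j : ℝ)| ^ (1 / α)) := by
    intro k
    have hg : ∀ j : Fin d, Summable
        (fun n : ℕ => (L ^ n / (n.factorial : ℝ)) ^ (α : ℝ) * |(k j : ℝ)| ^ n) :=
      fun j => (GF.gevrey_series_bound hα hL (abs_nonneg ((k j : ℝ)))).1
    have hg0 : ∀ (j : Fin d) (n : ℕ),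
        0 ≤ (L ^ n / (n.factorial : ℝ)) ^ (α : ℝ) * |(k j : ℝ)| ^ n :=
      fun j n => mul_nonneg (Real.rpow_nonneg (by positivity) _) (by positivity)
    obtain ⟨hS, hT⟩ := GF.pi_tsum_prod
      (fun j n => (L ^ n / (n.factorial : ℝ)) ^ (α : ℝ) * |(k j : ℝ)| ^ n) hg0 hg
    refine ⟨hS.congr fun m => (hfactor m k).symm, ?_⟩
    calc ∑' m : Fin d → ℕ, Bm m * GF.wt m k
        = ∑' m : Fin d → ℕ, ∏ j, ((L ^ m j / ((m j).factorial : ℝ)) ^ (α : ℝ)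
            * |(k j : ℝ)| ^ m j) := tsum_congr fun m => hfactor m k
      _ = ∏ j, ∑' n : ℕ, ((L ^ n / (n.factorial : ℝ)) ^ (α : ℝ) * |(k j : ℝ)| ^ n) := hT
      _ ≤ ∏ j, Real.exp (α * (L * |(k j : ℝ)| ^ (1 / α : ℝ))) := by
          refine Finset.prod_le_prod (fun j _ => tsum_nonneg fun n => hg0 j n) fun j _ => ?_
          exact (GF.gevrey_series_bound hα hL (abs_nonneg ((k j : ℝ)))).2
      _ = Real.exp (α * L * ∑ j, |(k j : ℝ)| ^ (1 / α)) := by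
          rw [← Real.exp_sum]
          congr 1
          rw [Finset.mul_sum]
          exact Finset.sum_congr rfl fun j _ => by ring
  -- the sup bounds
  have hmpd : ∀ m, mpd m f = GF.P c m := fun m => by rw [hfP]; exact GF.mpd_P hsW m
  set S1 : (Fin d → ℕ) → ℝ := fun m => ∑' k, GF.wt m k * ‖c k‖ with hS1
  have hsup : ∀ m, supOn (box2pi d) (mpd m f) ≤ S1 m := by
    intro m
    rw [hmpd m]
    exact GF.supOn_box_le fun x _ => GF.norm_P_le hsW m x
  have hgt_eq : ∀ m, gevreyTerm α (fun _ => L) (box2pi d) f m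
      = Bm m * supOn (box2pi d) (mpd m f) := by
    intro m
    rw [gevreyTerm, hBm]
  have hgt_nonneg : ∀ m, 0 ≤ gevreyTerm α (fun _ => L) (box2pi d) f m := fun m => by
    rw [hgt_eq m]
    exact mul_nonneg (hBm_nonneg m) (GF.supOn_box_nonneg _)
  -- double series
  set G : (Fin d → ℤ) × (Fin d → ℕ) → ℝ :=
    fun z => Bm z.2 * GF.wt z.2 z.1 * ‖c z.1‖ with hG
  have hGnn : (0 : (Fin d → ℤ) × (Fin d → ℕ) → ℝ) ≤ G := fun z =>
    mul_nonneg (mul_nonneg (hBm_nonneg _) (GF.wt_nonneg _ _)) (norm_nonneg _)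
  have hGslice : ∀ k, Summable fun m => G (k, m) := fun k =>
    ((hkfact k).1.mul_right ‖c k‖).congr fun m => by rw [hG]
  have hGsum_k : ∀ k, ∑' m, G (k, m)
      ≤ Real.exp (α * L * ∑ j, |(k j : ℝ)| ^ (1 / α)) * ‖c k‖ := by
    intro k
    have h1 : ∑' m, G (k, m) = (∑' m, Bm m * GF.wt m k) * ‖c k‖ := by
      rw [← tsum_mul_right]
    rw [h1]
    exact mul_le_mul_of_nonneg_right (hkfact k).2 (norm_nonneg _)
  have hGsummable : Summable G := (summable_prod_of_nonneg hGnn).mpr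
    ⟨hGslice, Summable.of_nonneg_of_le
      (fun k => tsum_nonneg fun m => hGnn (k, m)) hGsum_k hFsum⟩
  have hGswap : Summable fun z : (Fin d → ℕ) × (Fin d → ℤ) => G (z.2, z.1) :=
    hGsummable.prod_symm
  obtain ⟨hslice2, hsum2⟩ := (summable_prod_of_nonneg (fun z => hGnn (z.2, z.1))).mp hGswap
  -- compare `gevreyTerm` with the `m`-slices
  have hS2eq : ∀ m, (∑' k, G (k, m)) = Bm m * S1 m := by
    intro m
    rw [hS1, ← tsum_mul_left]
    exact tsum_congr fun k => by rw [hG]; ring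
  have hgt_le : ∀ m, gevreyTerm α (fun _ => L) (box2pi d) f m ≤ ∑' k, G (k, m) := by
    intro m
    rw [hgt_eq m, hS2eq m]
    exact mul_le_mul_of_nonneg_left (hsup m) (hBm_nonneg m)
  have hgevsum : Summable (gevreyTerm α (fun _ => L) (box2pi d) f) :=
    Summable.of_nonneg_of_le hgt_nonneg hgt_le hsum2
  refine ⟨hgevsum, ?_⟩
  have hsumfst : Summable fun k => ∑' m, G (k, m) :=
    ((summable_prod_of_nonneg hGnn).mp hGsummable).2
  calc ∑' m, gevreyTerm α (fun _ => L) (box2pi d) f m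
      ≤ ∑' m, ∑' k, G (k, m) := Summable.tsum_le_tsum hgt_le hgevsum hsum2
    _ = ∑' z : (Fin d → ℕ) × (Fin d → ℤ), G (z.2, z.1) :=
        (Summable.tsum_prod' hGswap hslice2).symm
    _ = ∑' z : (Fin d → ℤ) × (Fin d → ℕ), G z :=
        (Equiv.prodComm (Fin d → ℕ) (Fin d → ℤ)).tsum_eq G
    _ = ∑' k, ∑' m, G (k, m) := Summable.tsum_prod' hGsummable hGslice
    _ ≤ ∑' k : Fin d → ℤ, Real.exp (α * L * ∑ j, |(k j : ℝ)| ^ (1 / α)) * ‖c k‖ :=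
        Summable.tsum_le_tsum hGsum_k hsumfst hFsum
end
end

section
/- Let α>1, 0<ε<1, and u≥0 be real. Then exp(α(1−ε)u) ≤ (1−(1−ε)^{α/(α−1)})^{−(α−1)} · Σ_{n=0}^{∞} u^{αn}/(n!)^α. -/
/-!
Expand `exp ((1 - ε) u) = ∑ (uⁿ / n!) (1 - ε)ⁿ` and apply Hölder's inequality with the
exponents `α` and `q = α / (α - 1)`: the first factor gives `(∑ (uⁿ / n!)^α)^(1/α)`, the
second the geometric series `(∑ ((1 - ε)^q)ⁿ)^(1/q) = (1 - (1 - ε)^q)^(-1/q)`. Raising to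
the power `α` turns `α / q` into `α - 1`.
-/

open Real Nat

lemma Real.pow_div_factorial_rpow {x : ℝ} (hx : 0 ≤ x) (p : ℝ) (n : ℕ) :
    (x ^ n / n !) ^ p = x ^ (p * n) / (n ! : ℝ) ^ p := by
  rw [div_rpow (by positivity) (by positivity), ← rpow_natCast, ← rpow_mul hx, mul_comm]

lemma Real.summable_pow_div_factorial_rpow {x p : ℝ} (hx : 0 ≤ x) (hp : 1 ≤ p) :
    Summable fun n : ℕ => (x ^ n / n !) ^ p := by
  refine (summable_pow_div_factorial (x ^ p)).of_nonneg_of_le (fun n => by positivity) fun n => ?_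
  rw [pow_div_factorial_rpow hx, rpow_mul hx, rpow_natCast]
  have hfac : (1 : ℝ) ≤ n ! := mod_cast n.factorial_pos
  gcongr
  exact self_le_rpow_of_one_le hfac hp

lemma Real.exp_mul_eq_tsum (t x : ℝ) : exp (t * x) = ∑' n : ℕ, x ^ n / n ! * t ^ n := by
  rw [exp_eq_exp_ℝ, NormedSpace.exp_eq_tsum_div]
  exact tsum_congr fun n => by rw [mul_pow, div_mul_eq_mul_div, mul_comm]

lemma Real.exp_mul_le_tsum_rpow_mul_geometric {p q t x : ℝ} (hpq : p.HolderConjugate q)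
    (ht0 : 0 ≤ t) (ht1 : t < 1) (hx : 0 ≤ x) :
    exp (t * x) ≤ (∑' n : ℕ, (x ^ n / n !) ^ p) ^ (1 / p) * ((1 - t ^ q)⁻¹) ^ (1 / q) := by
  have hgeom : ∀ n : ℕ, (t ^ n) ^ q = (t ^ q) ^ n := fun n => by
    rw [← rpow_natCast, ← rpow_mul ht0, mul_comm, rpow_mul ht0, rpow_natCast]
  have htq0 : 0 ≤ t ^ q := rpow_nonneg ht0 q
  have htq1 : t ^ q < 1 := rpow_lt_one ht0 ht1 hpq.symm.pos
  have holder := inner_le_Lp_mul_Lq_tsum_of_nonneg hpq (fun n => by positivity)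
    (fun n => pow_nonneg ht0 n) (summable_pow_div_factorial_rpow hx hpq.lt.le)
    (by simpa only [hgeom] using summable_geometric_of_lt_one htq0 htq1)
  simpa only [← exp_mul_eq_tsum, hgeom, tsum_geometric_of_lt_one htq0 htq1] using holder

lemma Real.exp_mul_mul_le_rpow_mul_tsum {p q t x : ℝ} (hpq : p.HolderConjugate q)
    (ht0 : 0 ≤ t) (ht1 : t < 1) (hx : 0 ≤ x) :
    exp (p * t * x) ≤ (1 - t ^ q) ^ (-(p - 1)) * ∑' n : ℕ, (x ^ n / n !) ^ p := by
  set S := ∑' n : ℕ, (x ^ n / n !) ^ p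
  have hS : 0 ≤ S := tsum_nonneg fun n => by positivity
  have hr : 0 ≤ (1 - t ^ q)⁻¹ :=
    inv_nonneg.mpr (sub_nonneg.mpr (rpow_lt_one ht0 ht1 hpq.symm.pos).le)
  calc exp (p * t * x) = exp (t * x) ^ p := by rw [← exp_mul, mul_assoc, mul_comm]
    _ ≤ (S ^ (1 / p) * ((1 - t ^ q)⁻¹) ^ (1 / q)) ^ p :=
      rpow_le_rpow (exp_pos _).le (exp_mul_le_tsum_rpow_mul_geometric hpq ht0 ht1 hx) hpq.nonneg
    _ = S * (1 - t ^ q)⁻¹ ^ (p / q) := by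
      rw [mul_rpow (by positivity) (by positivity), ← rpow_mul hS, ← rpow_mul hr,
        one_div_mul_cancel hpq.ne_zero, rpow_one, one_div_mul_eq_div]
    _ = (1 - t ^ q) ^ (-(p - 1)) * S := by
      rw [hpq.div_conj_eq_sub_one, inv_rpow (inv_nonneg.mp hr), ← rpow_neg (inv_nonneg.mp hr),
        mul_comm]

/-- `exp(α(1−ε)u) ≤ (1−(1−ε)^{α/(α−1)})^{−(α−1)} · Σ_{n} u^{αn}/(n!)^α`. -/
theorem exp_le_holder_gevrey_series {α ε u : ℝ} (hα : 1 < α)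
    (hε0 : 0 < ε) (hε1 : ε < 1) (hu : 0 ≤ u) :
    Real.exp (α * (1 - ε) * u) ≤
      (1 - (1 - ε) ^ (α / (α - 1))) ^ (-(α - 1)) *
        ∑' n : ℕ, u ^ (α * n) / (Nat.factorial n : ℝ) ^ α := by
  have hconj : α.HolderConjugate (α / (α - 1)) := HolderConjugate.conjExponent hα
  simpa only [pow_div_factorial_rpow hu] using
    exp_mul_mul_le_rpow_mul_tsum hconj (by linarith) (by linarith) hu
end

section
/- Let m,N≥1 be integers, α>1, L>0, D≥0, B≥1, η≥0. Let E⊆{x∈ℤ^m : |x|<N} and let T,T':E×E→ℂ be matrices. Assume: (i) T is invertible with operator norm ‖T^{−1}‖≤B on ℓ²(E); (ii) |T^{−1}(x,x')| ≤ e^{−αL|x−x'|_α} whenever x,x'∈E and |x−x'|>D; (iii) |T'(x,x')−T(x,x')| ≤ η e^{−αL|x−x'|_α} for all x,x'∈E; and (iv) η·(2N)^{2m+1}·B²·e^{2αLmD^{1/α}} ≤ 1/2. Then T' is invertible, ‖T'^{−1}‖ ≤ 2B, and |T'^{−1}(x,x')| ≤ 2e^{−αL|x−x'|_α} whenever |x−x'|>D.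 -/
open scoped BigOperators

noncomputable section

/-- `|x| = max_j |x_j|` for an integer vector, as a real number. -/
def intSup {m : ℕ} (x : Fin m → ℤ) : ℝ :=
  ((Finset.univ.sup fun j => (x j).natAbs : ℕ) : ℝ)

/-- `|x|_α = Σ_j |x_j|^{1/α}` for an integer vector. -/
def adist (α : ℝ) {m : ℕ} (x : Fin m → ℤ) : ℝ :=
  ∑ j, |(x j : ℝ)| ^ (1 / α)

/-- The ℓ² operator norm of a matrix indexed by a finite set `E ⊆ ℤ^m`. -/
def opNorm {m : ℕ} {E : Finset (Fin m → ℤ)} (T : Matrix E E ℂ) : ℝ :=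
  ‖Matrix.toEuclideanCLM (𝕜 := ℂ) T‖

/-!
Write `w(x, x') = exp(-αL|x - x'|_α)`. Since `t ↦ t ^ (1/α)` is subadditive, `w` is
submultiplicative, so entrywise bounds `|A| ≤ a w` and `|A'| ≤ a' w` give `|A A'| ≤ |E| a a' w`.
Near the diagonal `w ≥ e^{-c}` with `c = αLm D^{1/α}`, so `|T⁻¹| ≤ C w` everywhere with
`C = B e^c`, and the smallness hypothesis says `|E|² C² η ≤ 1/2`. Hence
`‖T⁻¹ (T' - T)‖ ≤ 1/2`, which gives the invertibility of `T'` and `‖T'⁻¹‖ ≤ 2B` by a Neumann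
series. By the resolvent identity `T'⁻¹ = T⁻¹ - T⁻¹ (T' - T) T'⁻¹`, the best constant `M` in
`|T'⁻¹| ≤ M w` satisfies `M ≤ C + M/2`, so `M ≤ 2C`, and the correction term is at most `w`.
-/

open scoped Matrix.Norms.L2Operator
open Matrix
open scoped Ring

section NormedRing

variable {R : Type*} [NormedRing R]

theorem IsUnit.of_norm_inverse_mul_sub_lt_one [HasSummableGeomSeries R] {a b : R}
    (ha : IsUnit a) (h : ‖a⁻¹ʳ * (b - a)‖ < 1) : IsUnit b := by
  have hb : b = a * (1 - -(a⁻¹ʳ * (b - a))) := by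
    rw [sub_neg_eq_add, mul_add, mul_one, ← mul_assoc, Ring.mul_inverse_cancel a ha, one_mul,
      add_sub_cancel]
  rw [hb]
  exact ha.mul (Units.oneSub _ (by rwa [norm_neg])).isUnit

theorem norm_inverse_le_of_norm_inverse_mul_sub_le {a b : R} (hab : IsUnit a ↔ IsUnit b)
    {q : ℝ} (hq : ‖a⁻¹ʳ * (b - a)‖ ≤ q) (hq1 : q < 1) : ‖b⁻¹ʳ‖ ≤ ‖a⁻¹ʳ‖ / (1 - q) := by
  have hres : b⁻¹ʳ = a⁻¹ʳ - a⁻¹ʳ * (b - a) * b⁻¹ʳ := by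
    rw [← Ring.inverse_sub_inverse hab, sub_sub_cancel]
  have : ‖b⁻¹ʳ‖ ≤ ‖a⁻¹ʳ‖ + q * ‖b⁻¹ʳ‖ :=
    calc ‖b⁻¹ʳ‖ = ‖a⁻¹ʳ - a⁻¹ʳ * (b - a) * b⁻¹ʳ‖ := by rw [← hres]
      _ ≤ ‖a⁻¹ʳ‖ + ‖a⁻¹ʳ * (b - a)‖ * ‖b⁻¹ʳ‖ :=
          (norm_sub_le _ _).trans (by gcongr; exact norm_mul_le _ _)
      _ ≤ ‖a⁻¹ʳ‖ + q * ‖b⁻¹ʳ‖ := by gcongr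
  rw [le_div_iff₀ (by linarith)]
  linarith

end NormedRing

namespace Matrix

section L2OpNorm

variable {𝕜 m n : Type*} [RCLike 𝕜] [Fintype m] [Fintype n] [DecidableEq n]

theorem norm_apply_le_l2_opNorm (A : Matrix m n 𝕜) (i : m) (j : n) : ‖A i j‖ ≤ ‖A‖ := by
  have h := A.l2_opNorm_mulVec (EuclideanSpace.single j 1)
  rw [EuclideanSpace.single, PiLp.norm_single, norm_one, mul_one] at h
  refine le_trans (le_of_eq ?_) ((PiLp.norm_apply_le _ i).trans h)
  simp

theorem l2_opNorm_single_le [DecidableEq m] (i : m) (j : n) (c : 𝕜) :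
    ‖(single i j c : Matrix m n 𝕜)‖ ≤ ‖c‖ := by
  rw [l2_opNorm_def]
  refine ContinuousLinearMap.opNorm_le_bound _ (norm_nonneg _) fun v => ?_
  have hv : (toEuclideanLin ≪≫ₗ LinearMap.toContinuousLinearMap) (single i j c) v =
      EuclideanSpace.single i (c * v j) := by
    ext k
    simp [single_mulVec, Function.update_apply]
  rw [hv, EuclideanSpace.single, PiLp.norm_single, norm_mul]
  gcongr
  exact PiLp.norm_apply_le v j

theorem l2_opNorm_le_sum_norm_apply [DecidableEq m] (A : Matrix m n 𝕜) :
    ‖A‖ ≤ ∑ i, ∑ j, ‖A i j‖ := by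
  conv_lhs => rw [matrix_eq_sum_single A]
  refine (norm_sum_le _ _).trans (Finset.sum_le_sum fun i _ => ?_)
  exact (norm_sum_le _ _).trans (Finset.sum_le_sum fun j _ => l2_opNorm_single_le i j _)

end L2OpNorm

section BoundedByWeight

variable {n 𝕜 : Type*}

def BoundedByWeight [Norm 𝕜] (A : Matrix n n 𝕜) (a : ℝ) (w : n → n → ℝ) : Prop :=
  ∀ i j, ‖A i j‖ ≤ a * w i j

variable {w : n → n → ℝ} {a b : ℝ}

theorem BoundedByWeight.mono [Norm 𝕜] {A : Matrix n n 𝕜} (hA : A.BoundedByWeight a w)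
    (hab : a ≤ b) (hw : ∀ i j, 0 ≤ w i j) : A.BoundedByWeight b w :=
  fun i j => (hA i j).trans (mul_le_mul_of_nonneg_right hab (hw i j))

theorem BoundedByWeight.mul [Fintype n] [NormedRing 𝕜] {A B : Matrix n n 𝕜}
    (hA : A.BoundedByWeight a w) (hB : B.BoundedByWeight b w) (ha : 0 ≤ a) (hb : 0 ≤ b)
    (hw : ∀ i j k, w i j * w j k ≤ w i k) :
    (A * B).BoundedByWeight (Fintype.card n * a * b) w := by
  intro i k
  have hterm : ∀ j, ‖A i j * B j k‖ ≤ a * b * w i k := fun j =>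
    calc ‖A i j * B j k‖ ≤ ‖A i j‖ * ‖B j k‖ := norm_mul_le _ _
      _ ≤ (a * w i j) * (b * w j k) :=
          mul_le_mul (hA i j) (hB j k) (norm_nonneg _) ((norm_nonneg _).trans (hA i j))
      _ = a * b * (w i j * w j k) := by ring
      _ ≤ a * b * w i k := by gcongr; exact hw i j k
  calc ‖(A * B) i k‖ ≤ ∑ j, ‖A i j * B j k‖ := norm_sum_le _ _
    _ ≤ ∑ _j : n, a * b * w i k := Finset.sum_le_sum fun j _ => hterm j
    _ = Fintype.card n * a * b * w i k := by
        rw [Finset.sum_const, Finset.card_univ, nsmul_eq_mul]; ring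

theorem BoundedByWeight.l2_opNorm_le [Fintype n] [DecidableEq n] [RCLike 𝕜]
    {A : Matrix n n 𝕜} (hA : A.BoundedByWeight a w) (ha : 0 ≤ a) (hw : ∀ i j, w i j ≤ 1) :
    ‖A‖ ≤ Fintype.card n ^ 2 * a :=
  calc ‖A‖ ≤ ∑ i, ∑ j, ‖A i j‖ := l2_opNorm_le_sum_norm_apply A
    _ ≤ ∑ _i : n, ∑ _j : n, a := by
        gcongr with i _ j _
        exact (hA i j).trans (mul_le_of_le_one_right ha (hw i j))
    _ = Fintype.card n ^ 2 * a := by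
        simp only [Finset.sum_const, Finset.card_univ, nsmul_eq_mul]; ring

theorem BoundedByWeight.of_far_of_near [SeminormedAddGroup 𝕜] {A : Matrix n n 𝕜} {B δ : ℝ}
    {p : n → n → Prop}
    (hB : ∀ i j, ‖A i j‖ ≤ B) (hδ : 0 < δ) (hδB : δ ≤ B)
    (hfar : ∀ i j, p i j → ‖A i j‖ ≤ w i j) (hnear : ∀ i j, ¬ p i j → δ ≤ w i j) :
    A.BoundedByWeight (B / δ) w := by
  intro i j
  have hδB' : 1 ≤ B / δ := (one_le_div hδ).mpr hδB
  by_cases hp : p i j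
  · exact (hfar i j hp).trans (le_mul_of_one_le_left ((norm_nonneg _).trans (hfar i j hp)) hδB')
  · calc ‖A i j‖ ≤ B := hB i j
      _ = B / δ * δ := (div_mul_cancel₀ B hδ.ne').symm
      _ ≤ B / δ * w i j := by gcongr; exact hnear i j hp

theorem BoundedByWeight.of_le_add_mul [Finite n] [SeminormedAddGroup 𝕜] {A : Matrix n n 𝕜}
    {q : ℝ} (hq : q < 1) (hw : ∀ i j, 0 < w i j)
    (h : ∀ M, 0 ≤ M → A.BoundedByWeight M w → A.BoundedByWeight (a + q * M) w) :
    A.BoundedByWeight (a / (1 - q)) w := by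
  cases isEmpty_or_nonempty n with
  | inl _ => exact fun i => isEmptyElim i
  | inr _ =>
    obtain ⟨p, hp⟩ := Finite.exists_max fun p : n × n => ‖A p.1 p.2‖ / w p.1 p.2
    set M := ‖A p.1 p.2‖ / w p.1 p.2
    have hM : A.BoundedByWeight M w := fun i j => (div_le_iff₀ (hw i j)).mp (hp (i, j))
    have hfix : M ≤ a + q * M :=
      (div_le_iff₀ (hw _ _)).mpr (h M (div_nonneg (norm_nonneg _) (hw _ _).le) hM p.1 p.2)
    exact hM.mono ((le_div_iff₀ (by linarith)).mpr (by linarith)) fun i j => (hw i j).le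

theorem norm_inv_apply_le_of_boundedByWeight [Fintype n] [DecidableEq n] [NormedCommRing 𝕜]
    {A A' : Matrix n n 𝕜} {C η M : ℝ} (hAA' : IsUnit A ↔ IsUnit A')
    (hA : A⁻¹.BoundedByWeight C w) (hΔ : (A' - A).BoundedByWeight η w)
    (hM : A'⁻¹.BoundedByWeight M w) (hC : 0 ≤ C) (hη : 0 ≤ η) (hM0 : 0 ≤ M)
    (hw : ∀ i j k, w i j * w j k ≤ w i k) (i j : n) :
    ‖A'⁻¹ i j‖ ≤ ‖A⁻¹ i j‖ + Fintype.card n ^ 2 * C * η * M * w i j := by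
  have hres : A'⁻¹ = A⁻¹ - A⁻¹ * (A' - A) * A'⁻¹ := by rw [← inv_sub_inv hAA', sub_sub_cancel]
  have hcorr := (hA.mul hΔ hC hη hw).mul hM (by positivity) hM0 hw i j
  calc ‖A'⁻¹ i j‖ = ‖A⁻¹ i j - (A⁻¹ * (A' - A) * A'⁻¹) i j‖ := by rw [← sub_apply, ← hres]
    _ ≤ ‖A⁻¹ i j‖ + ‖(A⁻¹ * (A' - A) * A'⁻¹) i j‖ := norm_sub_le _ _
    _ ≤ ‖A⁻¹ i j‖ + Fintype.card n ^ 2 * C * η * M * w i j := by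
        gcongr
        exact hcorr.trans_eq (by ring)

theorem boundedByWeight_inv_of_boundedByWeight_sub [Fintype n] [DecidableEq n]
    [NormedCommRing 𝕜] {A A' : Matrix n n 𝕜} {C η q : ℝ} (hAA' : IsUnit A ↔ IsUnit A')
    (hA : A⁻¹.BoundedByWeight C w) (hΔ : (A' - A).BoundedByWeight η w) (hC : 0 ≤ C)
    (hη : 0 ≤ η) (hw_pos : ∀ i j, 0 < w i j) (hw : ∀ i j k, w i j * w j k ≤ w i k)
    (hq : Fintype.card n ^ 2 * C * η ≤ q) (hq1 : q < 1) :
    A'⁻¹.BoundedByWeight (C / (1 - q)) w := by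
  refine BoundedByWeight.of_le_add_mul hq1 hw_pos fun M hM0 hM i j => ?_
  calc ‖A'⁻¹ i j‖ ≤ ‖A⁻¹ i j‖ + Fintype.card n ^ 2 * C * η * M * w i j :=
        norm_inv_apply_le_of_boundedByWeight hAA' hA hΔ hM hC hη hM0 hw i j
    _ ≤ C * w i j + q * M * w i j := by
        gcongr
        · exact hA i j
        · exact (hw_pos i j).le
    _ = (C + q * M) * w i j := by ring

theorem norm_inv_apply_le_add_of_boundedByWeight_sub [Fintype n] [DecidableEq n]
    [NormedCommRing 𝕜] {A A' : Matrix n n 𝕜} {C η : ℝ} (hAA' : IsUnit A ↔ IsUnit A')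
    (hA : A⁻¹.BoundedByWeight C w) (hΔ : (A' - A).BoundedByWeight η w) (hC : 1 ≤ C)
    (hη : 0 ≤ η) (hw_pos : ∀ i j, 0 < w i j) (hw : ∀ i j k, w i j * w j k ≤ w i k)
    (hsmall : Fintype.card n ^ 2 * C ^ 2 * η ≤ 1 / 2) (i j : n) :
    ‖A'⁻¹ i j‖ ≤ ‖A⁻¹ i j‖ + w i j := by
  have hq : Fintype.card n ^ 2 * C * η ≤ 1 / 2 :=
    le_trans (by gcongr; exact le_self_pow₀ hC two_ne_zero) hsmall
  have hA' := boundedByWeight_inv_of_boundedByWeight_sub hAA' hA hΔ (by positivity) hη hw_pos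
    hw hq (by norm_num)
  calc ‖A'⁻¹ i j‖ ≤ ‖A⁻¹ i j‖ + Fintype.card n ^ 2 * C * η * (C / (1 - 1 / 2)) * w i j :=
        norm_inv_apply_le_of_boundedByWeight hAA' hA hΔ hA' (by positivity) hη (by positivity)
          hw i j
    _ ≤ ‖A⁻¹ i j‖ + 1 * w i j := by
        gcongr
        · exact (hw_pos i j).le
        · linarith [show Fintype.card n ^ 2 * C * η * (C / (1 - 1 / 2)) =
            2 * (Fintype.card n ^ 2 * C ^ 2 * η) by ring]
    _ = ‖A⁻¹ i j‖ + w i j := by rw [one_mul]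

theorem isUnit_and_l2_opNorm_inv_le_of_boundedByWeight_sub [Fintype n] [DecidableEq n]
    [RCLike 𝕜] {A A' : Matrix n n 𝕜} {B η : ℝ} (hA : IsUnit A) (hAnorm : ‖A⁻¹‖ ≤ B)
    (hΔ : (A' - A).BoundedByWeight η w) (hη : 0 ≤ η) (hw : ∀ i j, w i j ≤ 1)
    (hsmall : B * (Fintype.card n ^ 2 * η) ≤ 1 / 2) :
    IsUnit A' ∧ ‖A'⁻¹‖ ≤ 2 * B := by
  have hS : ‖A⁻¹ʳ * (A' - A)‖ ≤ 1 / 2 := by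
    rw [← nonsing_inv_eq_ringInverse]
    calc ‖A⁻¹ * (A' - A)‖ ≤ ‖A⁻¹‖ * ‖A' - A‖ := norm_mul_le _ _
      _ ≤ B * (Fintype.card n ^ 2 * η) :=
          mul_le_mul hAnorm (hΔ.l2_opNorm_le hη hw) (norm_nonneg _) ((norm_nonneg _).trans hAnorm)
      _ ≤ 1 / 2 := hsmall
  have hA' := hA.of_norm_inverse_mul_sub_lt_one (hS.trans_lt (by norm_num))
  refine ⟨hA', ?_⟩
  calc ‖A'⁻¹‖ = ‖A'⁻¹ʳ‖ := by rw [nonsing_inv_eq_ringInverse]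
    _ ≤ ‖A⁻¹ʳ‖ / (1 - 1 / 2) :=
        norm_inverse_le_of_norm_inverse_mul_sub_le (iff_of_true hA hA') hS (by norm_num)
    _ = 2 * ‖A⁻¹‖ := by rw [← nonsing_inv_eq_ringInverse]; ring
    _ ≤ 2 * B := by gcongr

end BoundedByWeight

end Matrix

section DecayWeight

variable {m : ℕ}

theorem abs_le_intSup (v : Fin m → ℤ) (j : Fin m) : |(v j : ℝ)| ≤ intSup v := by
  rw [intSup, ← Int.cast_abs, ← Nat.cast_natAbs, Nat.cast_le]
  exact Finset.le_sup (f := fun j => (v j).natAbs) (Finset.mem_univ j)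

theorem adist_nonneg (α : ℝ) (v : Fin m → ℤ) : 0 ≤ adist α v :=
  Finset.sum_nonneg fun _ _ => Real.rpow_nonneg (abs_nonneg _) _

theorem adist_add_le {α : ℝ} (hα : 1 ≤ α) (u v : Fin m → ℤ) :
    adist α (u + v) ≤ adist α u + adist α v := by
  rw [adist, adist, adist, ← Finset.sum_add_distrib]
  refine Finset.sum_le_sum fun j _ => ?_
  have hp : 0 ≤ 1 / α := by positivity
  calc |((u + v) j : ℝ)| ^ (1 / α) ≤ (|(u j : ℝ)| + |(v j : ℝ)|) ^ (1 / α) := by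
        gcongr
        rw [Pi.add_apply, Int.cast_add]
        exact abs_add_le _ _
    _ ≤ |(u j : ℝ)| ^ (1 / α) + |(v j : ℝ)| ^ (1 / α) :=
        Real.rpow_add_le_add_rpow (abs_nonneg _) (abs_nonneg _) hp
          ((div_le_one (by linarith)).mpr hα)

theorem adist_le_of_intSup_le {α D : ℝ} (hα : 0 ≤ α) {v : Fin m → ℤ} (h : intSup v ≤ D) :
    adist α v ≤ m * D ^ (1 / α) :=
  calc adist α v ≤ ∑ _j : Fin m, D ^ (1 / α) :=
        Finset.sum_le_sum fun j _ => by gcongr; exact (abs_le_intSup v j).trans h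
    _ = m * D ^ (1 / α) := by simp

def decayWeight (α L : ℝ) (v : Fin m → ℤ) : ℝ :=
  Real.exp (-(α * L * adist α v))

variable {α L : ℝ}

theorem decayWeight_pos (v : Fin m → ℤ) : 0 < decayWeight α L v := Real.exp_pos _

theorem decayWeight_le_one (hαL : 0 ≤ α * L) (v : Fin m → ℤ) : decayWeight α L v ≤ 1 :=
  Real.exp_le_one_iff.mpr (neg_nonpos.mpr (mul_nonneg hαL (adist_nonneg α v)))

theorem decayWeight_sub_mul_decayWeight_sub_le (hα : 1 ≤ α) (hαL : 0 ≤ α * L)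
    (x y z : Fin m → ℤ) :
    decayWeight α L (x - y) * decayWeight α L (y - z) ≤ decayWeight α L (x - z) := by
  rw [decayWeight, decayWeight, decayWeight, ← Real.exp_add, Real.exp_le_exp,
    ← sub_add_sub_cancel x y z]
  nlinarith [mul_le_mul_of_nonneg_left (adist_add_le hα (x - y) (y - z)) hαL]

theorem exp_neg_le_decayWeight {D : ℝ} (hα : 0 ≤ α) (hαL : 0 ≤ α * L) {v : Fin m → ℤ}
    (h : intSup v ≤ D) : Real.exp (-(α * L * (m * D ^ (1 / α)))) ≤ decayWeight α L v := by
  rw [decayWeight, Real.exp_le_exp, neg_le_neg_iff]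
  exact mul_le_mul_of_nonneg_left (adist_le_of_intSup_le hα h) hαL

end DecayWeight

theorem card_le_of_forall_abs_lt {m N : ℕ} {E : Finset (Fin m → ℤ)}
    (hE : ∀ x ∈ E, ∀ j, |x j| < (N : ℤ)) : E.card ≤ (2 * N) ^ m := by
  have hsub : E ⊆ Fintype.piFinset fun _ : Fin m => Finset.Ioo (-(N : ℤ)) N := fun x hx =>
    Fintype.mem_piFinset.mpr fun j => Finset.mem_Ioo.mpr (abs_lt.mp (hE x hx j))
  calc E.card ≤ (Fintype.piFinset fun _ : Fin m => Finset.Ioo (-(N : ℤ)) N).card :=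
        Finset.card_le_card hsub
    _ ≤ (2 * N) ^ m := by
        rw [Fintype.card_piFinset, Finset.prod_const, Finset.card_univ, Fintype.card_fin,
          Int.card_Ioo]
        exact Nat.pow_le_pow_left (by omega) m

theorem card_sq_le_of_forall_abs_lt {m N : ℕ} (hN : 1 ≤ N) {E : Finset (Fin m → ℤ)}
    (hE : ∀ x ∈ E, ∀ j, |x j| < (N : ℤ)) : (E.card : ℝ) ^ 2 ≤ (2 * (N : ℝ)) ^ (2 * m + 1) :=
  calc (E.card : ℝ) ^ 2 ≤ ((2 * (N : ℝ)) ^ m) ^ 2 := by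
        gcongr; exact_mod_cast card_le_of_forall_abs_lt hE
    _ ≤ (2 * (N : ℝ)) ^ (2 * m + 1) := by
        rw [← pow_mul, mul_comm m 2]
        exact pow_le_pow_right₀ (by norm_cast; omega) (by omega)

theorem card_sq_mul_sq_mul_le_half {m N : ℕ} (hN : 1 ≤ N) {E : Finset (Fin m → ℤ)}
    (hE : ∀ x ∈ E, ∀ j, |x j| < (N : ℤ)) {α L D B η : ℝ} (hη : 0 ≤ η)
    (hsmall : η * (2 * (N : ℝ)) ^ (2 * m + 1) * B ^ 2 *
        Real.exp (2 * α * L * m * D ^ (1 / α)) ≤ 1 / 2) :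
    (E.card : ℝ) ^ 2 * (B / Real.exp (-(α * L * (m * D ^ (1 / α))))) ^ 2 * η ≤ 1 / 2 :=
  calc (E.card : ℝ) ^ 2 * (B / Real.exp (-(α * L * (m * D ^ (1 / α))))) ^ 2 * η
      ≤ (2 * (N : ℝ)) ^ (2 * m + 1) * (B / Real.exp (-(α * L * (m * D ^ (1 / α))))) ^ 2 * η := by
        gcongr; exact card_sq_le_of_forall_abs_lt hN hE
    _ = η * (2 * (N : ℝ)) ^ (2 * m + 1) * B ^ 2 * Real.exp (2 * α * L * m * D ^ (1 / α)) := by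
        simp only [Real.exp_neg, div_inv_eq_mul, mul_pow, ← Real.exp_nat_mul]
        ring_nf
    _ ≤ 1 / 2 := hsmall

theorem inverse_stable_offdiag_decay_general {m N : ℕ} (hN : 1 ≤ N)
    {α L D B η : ℝ} (hα : 1 < α) (hL : 0 < L) (hD : 0 ≤ D) (hB : 1 ≤ B) (hη : 0 ≤ η)
    (E : Finset (Fin m → ℤ)) (hE : ∀ x ∈ E, ∀ j, |x j| < (N : ℤ))
    (T T' : Matrix E E ℂ)
    (hTunit : IsUnit T)
    (hTnorm : opNorm T⁻¹ ≤ B)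
    (hTdecay : ∀ x x' : E, D < intSup ((x : Fin m → ℤ) - (x' : Fin m → ℤ)) →
      ‖T⁻¹ x x'‖ ≤ Real.exp (-(α * L * adist α ((x : Fin m → ℤ) - (x' : Fin m → ℤ)))))
    (hdiff : ∀ x x' : E, ‖T' x x' - T x x'‖ ≤
      η * Real.exp (-(α * L * adist α ((x : Fin m → ℤ) - (x' : Fin m → ℤ)))))
    (hsmall : η * (2 * (N : ℝ)) ^ (2 * m + 1) * B ^ 2 *
        Real.exp (2 * α * L * m * D ^ (1 / α)) ≤ 1 / 2) :
    IsUnit T' ∧ opNorm T'⁻¹ ≤ 2 * B ∧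
      ∀ x x' : E, D < intSup ((x : Fin m → ℤ) - (x' : Fin m → ℤ)) →
        ‖T'⁻¹ x x'‖ ≤
          2 * Real.exp (-(α * L * adist α ((x : Fin m → ℤ) - (x' : Fin m → ℤ)))) := by
  have hαL : 0 ≤ α * L := by positivity
  set w : E → E → ℝ := fun x y => decayWeight α L ((x : Fin m → ℤ) - (y : Fin m → ℤ))
  set δ := Real.exp (-(α * L * (m * D ^ (1 / α))))
  have hδ1 : δ ≤ 1 := Real.exp_le_one_iff.mpr (by
    have := Real.rpow_nonneg hD (1 / α); simp only [neg_nonpos]; positivity)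
  set C := B / δ
  have hC1 : 1 ≤ C := (one_le_div (Real.exp_pos _)).mpr (hδ1.trans hB)
  have hTinv : T⁻¹.BoundedByWeight C w :=
    BoundedByWeight.of_far_of_near (fun x y => (norm_apply_le_l2_opNorm _ x y).trans hTnorm)
      (Real.exp_pos _) (hδ1.trans hB) hTdecay
      (fun x y h => exp_neg_le_decayWeight (by linarith) hαL (not_lt.mp h))
  have hCη : (Fintype.card E : ℝ) ^ 2 * C ^ 2 * η ≤ 1 / 2 := by
    rw [Fintype.card_coe]; exact card_sq_mul_sq_mul_le_half hN hE hη hsmall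
  have hBC : B ≤ C ^ 2 :=
    (le_div_self (by linarith) (Real.exp_pos _) hδ1).trans (le_self_pow₀ hC1 two_ne_zero)
  obtain ⟨hT', hT'norm⟩ := isUnit_and_l2_opNorm_inv_le_of_boundedByWeight_sub hTunit hTnorm hdiff
    hη (fun _ _ => decayWeight_le_one hαL _)
    ((mul_le_mul_of_nonneg_right hBC (by positivity)).trans (by linarith))
  refine ⟨hT', hT'norm, fun x x' hxx' => ?_⟩
  have hfar : ‖T⁻¹ x x'‖ ≤ w x x' := hTdecay x x' hxx'
  have := norm_inv_apply_le_add_of_boundedByWeight_sub (iff_of_true hTunit hT') hTinv hdiff hC1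
    hη (fun _ _ => decayWeight_pos _)
    (fun x y z => decayWeight_sub_mul_decayWeight_sub_le hα.le hαL (x : Fin m → ℤ) y z) hCη x x'
  show ‖T'⁻¹ x x'‖ ≤ 2 * w x x'
  linarith

/-- stability of the inverse with off-diagonal decay away from
distance `D`, under a small perturbation. -/
theorem inverse_stable_offdiag_decay {m N : ℕ} (hm : 1 ≤ m) (hN : 1 ≤ N)
    {α L D B η : ℝ} (hα : 1 < α) (hL : 0 < L) (hD : 0 ≤ D) (hB : 1 ≤ B) (hη : 0 ≤ η)
    (E : Finset (Fin m → ℤ)) (hE : ∀ x ∈ E, ∀ j, |x j| < (N : ℤ))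
    (T T' : Matrix E E ℂ)
    (hTunit : IsUnit T)
    (hTnorm : opNorm T⁻¹ ≤ B)
    (hTdecay : ∀ x x' : E, D < intSup ((x : Fin m → ℤ) - (x' : Fin m → ℤ)) →
      ‖T⁻¹ x x'‖ ≤ Real.exp (-(α * L * adist α ((x : Fin m → ℤ) - (x' : Fin m → ℤ)))))
    (hdiff : ∀ x x' : E, ‖T' x x' - T x x'‖ ≤
      η * Real.exp (-(α * L * adist α ((x : Fin m → ℤ) - (x' : Fin m → ℤ)))))
    (hsmall : η * (2 * (N : ℝ)) ^ (2 * m + 1) * B ^ 2 *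
        Real.exp (2 * α * L * m * D ^ (1 / α)) ≤ 1 / 2) :
    IsUnit T' ∧ opNorm T'⁻¹ ≤ 2 * B ∧
      ∀ x x' : E, D < intSup ((x : Fin m → ℤ) - (x' : Fin m → ℤ)) →
        ‖T'⁻¹ x x'‖ ≤
          2 * Real.exp (-(α * L * adist α ((x : Fin m → ℤ) - (x' : Fin m → ℤ)))) :=
  inverse_stable_offdiag_decay_general hN hα hL hD hB hη E hE T T' hTunit hTnorm hTdecay hdiff
    hsmall
end
end
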